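/- arXiv:1610.01635 — 9 statements merged into one kernel-verified Lean document; each statement's English description precedes it below -/
import Mathlib

section
/- For every integer n ≥ 1 and every constant c ∈ ℝ, the Vandermonde determinant Δ(x) = ∏_{1 ≤ i < j ≤ n} (x_i − x_j) satisfies L Δ = 0 on ℝ^n, where L = ∑_{i=1}^n (2 x_i ∂_i² + c ∂_i) is the generator of n independent squared Bessel processes. -/
/-!
In the variable `x i` the Vandermonde product is `vdCofactor i x * p_i (x i)`, where
`p_i = ∏_{j ≠ i} (X - x j)` and `vdCofactor i x` does not involve `x i`; hence
`L Δ (x) = ∑ i, vdCofactor i x * (2 x_i p_i''(x_i) + c p_i'(x_i))`.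
When the coordinates are distinct, `vdCofactor i x = Δ(x) / p_i(x_i)`, and with
`P = ∏_j (X - x j)` the identities `P''(x_i) = 2 p_i'(x_i)` and
`(P X)'''(x_i) = 3 (x_i p_i''(x_i) + 2 p_i'(x_i))` produce one polynomial `Q` of degree `< n - 1`
with `Q(x_i) = 2 x_i p_i''(x_i) + c p_i'(x_i)` for every `i`. By Lagrange interpolation
`∑ i, Q(x_i) / p_i(x_i)` is the coefficient of `X^(n-1)` in `Q`, which is zero.
Both sides are continuous in `x`, and vectors with distinct coordinates are dense.
-/

noncomputable def pd {n : ℕ} (i : Fin n) (f : (Fin n → ℝ) → ℝ) (x : Fin n → ℝ) : ℝ :=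
  deriv (fun t => f (Function.update x i t)) (x i)

noncomputable def vd {n : ℕ} (x : Fin n → ℝ) : ℝ :=
  ∏ i : Fin n, ∏ j ∈ Finset.Ioi i, (x i - x j)

open Finset Polynomial Lagrange

theorem Finset.prod_univ_prod_univ_eq_mul_prod_erase {ι M : Type*} [Fintype ι] [DecidableEq ι]
    [CommMonoid M] (f : ι → ι → M) (i : ι) :
    ∏ a, ∏ b, f a b = f i i * (∏ j ∈ univ.erase i, f i j * f j i) *
      ∏ a ∈ univ.erase i, ∏ b ∈ univ.erase i, f a b := by
  simp only [← mul_prod_erase univ _ (mem_univ i), prod_mul_distrib]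
  ac_rfl

theorem Polynomial.degree_iterate_derivative_lt {R : Type*} [Semiring R] {p : R[X]} {m k : ℕ}
    (hp : p.natDegree < m + k) : (derivative^[k] p).degree < m := by
  rcases lt_or_ge p.natDegree k with hk | hk
  · simp [iterate_derivative_eq_zero hk]
  · exact degree_le_natDegree.trans_lt
      (by exact_mod_cast (natDegree_iterate_derivative p k).trans_lt (by omega))

theorem Polynomial.iterate_derivative_succ_X_sub_C_mul {R : Type*} [CommRing R] (a : R)
    (p : R[X]) (k : ℕ) :
    derivative^[k + 1] ((X - C a) * p) =
      (X - C a) * derivative^[k + 1] p + (k + 1 : R[X]) * derivative^[k] p := by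
  induction k with
  | zero => simp [derivative_mul]; ring
  | succ k ih =>
    rw [Function.iterate_succ_apply', ih]
    simp only [Function.iterate_succ_apply', derivative_mul, derivative_add, derivative_sub,
      derivative_X, derivative_C, sub_zero, one_mul, derivative_natCast, derivative_one,
      zero_mul, zero_add, add_zero]
    push_cast
    ring

theorem Polynomial.eval_iterate_derivative_succ_X_sub_C_mul {R : Type*} [CommRing R] (a : R)
    (p : R[X]) (k : ℕ) :
    (derivative^[k + 1] ((X - C a) * p)).eval a = (k + 1) * (derivative^[k] p).eval a := by
  simp [iterate_derivative_succ_X_sub_C_mul]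

theorem Lagrange.eval_iterate_derivative_two_nodal_at_node {ι R : Type*} [CommRing R]
    [DecidableEq ι] {s : Finset ι} {v : ι → R} {i : ι} (hi : i ∈ s) :
    (derivative^[2] (nodal s v)).eval (v i) = 2 * (derivative (nodal (s.erase i) v)).eval (v i) := by
  rw [nodal_eq_mul_nodal_erase hi, eval_iterate_derivative_succ_X_sub_C_mul]
  norm_num

theorem Lagrange.eval_iterate_derivative_three_nodal_mul_X_at_node {ι R : Type*} [CommRing R]
    [DecidableEq ι] {s : Finset ι} {v : ι → R} {i : ι} (hi : i ∈ s) :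
    (derivative^[3] (nodal s v * X)).eval (v i) =
      3 * (v i * (derivative^[2] (nodal (s.erase i) v)).eval (v i) +
        2 * (derivative (nodal (s.erase i) v)).eval (v i)) := by
  rw [nodal_eq_mul_nodal_erase hi, mul_assoc, eval_iterate_derivative_succ_X_sub_C_mul,
    iterate_derivative_mul_X]
  simp only [Nat.cast_ofNat, Function.iterate_one, Nat.add_one_sub_one, nsmul_eq_mul,
    eval_add, eval_mul, eval_X, eval_ofNat]
  ring

theorem Lagrange.sum_eval_div_prod_sub_eq_zero {F ι : Type*} [Field F] [DecidableEq ι]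
    {s : Finset ι} {v : ι → F} (hvs : Set.InjOn v s) {q : F[X]} (hq : q.degree < ↑(#s - 1)) :
    ∑ i ∈ s, q.eval (v i) / ∏ j ∈ s.erase i, (v i - v j) = 0 := by
  rw [← coeff_eq_sum hvs (hq.trans_le (by exact_mod_cast Nat.sub_le _ _))]
  exact coeff_eq_zero_of_degree_lt hq

theorem continuous_eval_iterate_derivative_nodal {ι R : Type*} [CommRing R] [TopologicalSpace R]
    [IsTopologicalRing R] (s : Finset ι) (i : ι) (k : ℕ) :
    Continuous fun x : ι → R => (derivative^[k] (nodal s x)).eval (x i) := by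
  classical
  induction k generalizing s with
  | zero =>
    simpa [eval_nodal] using
      continuous_finsetProd s fun j _ => (continuous_apply i).sub (continuous_apply j)
  | succ k ih =>
    simp only [Function.iterate_succ_apply, derivative_nodal, iterate_derivative_sum,
      eval_finsetSum]
    exact continuous_finsetSum _ fun j _ => ih _

theorem dense_setOf_injective {ι : Type*} [Fintype ι] :
    Dense {x : ι → ℝ | Function.Injective x} := by
  classical
  have hinter : {x : ι → ℝ | Function.Injective x} =
      ⋂ p : {p : ι × ι // p.1 ≠ p.2}, {x | x p.1.1 ≠ x p.1.2} := by
    ext x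
    simp only [Set.mem_ofPred_eq, Set.mem_iInter, Subtype.forall, Prod.forall]
    exact ⟨fun hx a b hab h => hab (hx h), fun hx a b h => by_contra fun hab => hx a b hab h⟩
  rw [hinter]
  refine dense_iInter_of_isOpen (fun p => isOpen_ne_fun (continuous_apply _) (continuous_apply _))
    fun ⟨(a, b), (hab : a ≠ b)⟩ => ?_
  let f : (ι → ℝ) →ₗ[ℝ] ℝ := (LinearMap.proj a : (ι → ℝ) →ₗ[ℝ] ℝ) - LinearMap.proj b
  have hsurj : Function.Surjective f := fun s => ⟨Pi.single a s, by simp [f, hab.symm]⟩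
  convert (dense_compl_singleton (0 : ℝ)).preimage (f.isOpenMap_of_finiteDimensional hsurj)
  ext x
  simp [f, sub_eq_zero]

section Vandermonde

variable {n : ℕ}

theorem pd_eq_eval_derivative {f : (Fin n → ℝ) → ℝ} {i : Fin n} {x : Fin n → ℝ} {p : ℝ[X]}
    (hf : ∀ t, f (Function.update x i t) = p.eval t) :
    pd i f x = (derivative p).eval (x i) := by
  simp only [pd, hf]
  exact Polynomial.deriv p

theorem pd_pd_eq_eval_derivative_derivative {f : (Fin n → ℝ) → ℝ} {i : Fin n}
    {x : Fin n → ℝ} {p : ℝ[X]} (hf : ∀ t, f (Function.update x i t) = p.eval t) :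
    pd i (pd i f) x = (derivative (derivative p)).eval (x i) :=
  pd_eq_eval_derivative fun t => by
    rw [pd_eq_eval_derivative (p := p) fun s => by rw [Function.update_idem, hf],
      Function.update_self]

theorem vd_eq_prod_prod_ite (x : Fin n → ℝ) :
    vd x = ∏ a, ∏ b, if a < b then x a - x b else 1 := by
  simp only [vd, ← prod_filter, filter_lt_eq_Ioi]

noncomputable def vdCofactor (i : Fin n) (x : Fin n → ℝ) : ℝ :=
  (∏ j ∈ univ.erase i, if i < j then 1 else -1) *
    ∏ a ∈ univ.erase i, ∏ b ∈ univ.erase i, if a < b then x a - x b else 1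

theorem continuous_vdCofactor (i : Fin n) : Continuous (vdCofactor i) :=
  continuous_const.mul <| continuous_finsetProd _ fun a _ => continuous_finsetProd _ fun b _ => by
    split_ifs <;> fun_prop

theorem vd_update (i : Fin n) (x : Fin n → ℝ) (t : ℝ) :
    vd (Function.update x i t) = vdCofactor i x * (nodal (univ.erase i) x).eval t := by
  set y := Function.update x i t
  have hpair : ∀ j ∈ univ.erase i,
      ((if i < j then y i - y j else 1) * if j < i then y j - y i else 1) =
        (if i < j then 1 else -1) * (t - x j) := by
    intro j hj
    simp only [y, Function.update_self, Function.update_of_ne (ne_of_mem_erase hj)]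
    rcases lt_or_gt_of_ne (ne_of_mem_erase hj) with h | h <;> simp [h, h.not_gt]
  have hrest : ∀ a ∈ univ.erase i, ∀ b ∈ univ.erase i,
      (if a < b then y a - y b else 1) = if a < b then x a - x b else 1 := by
    intro a ha b hb
    simp only [y, Function.update_of_ne (ne_of_mem_erase ha),
      Function.update_of_ne (ne_of_mem_erase hb)]
  rw [vd_eq_prod_prod_ite, prod_univ_prod_univ_eq_mul_prod_erase _ i, vdCofactor, eval_nodal,
    if_neg (lt_irrefl i), one_mul, prod_congr rfl hpair, prod_mul_distrib,
    prod_congr rfl fun a ha => prod_congr rfl (hrest a ha)]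
  ring

noncomputable def squaredBesselGenerator (c : ℝ) (f : (Fin n → ℝ) → ℝ) (x : Fin n → ℝ) : ℝ :=
  ∑ i, (2 * x i * pd i (pd i f) x + c * pd i f x)

theorem squaredBesselGenerator_vd_eq_sum (c : ℝ) (x : Fin n → ℝ) :
    squaredBesselGenerator c vd x = ∑ i, vdCofactor i x *
      (2 * x i * (derivative^[2] (nodal (univ.erase i) x)).eval (x i) +
        c * (derivative (nodal (univ.erase i) x)).eval (x i)) := by
  refine sum_congr rfl fun i _ => ?_
  have hslice : ∀ t, vd (Function.update x i t) =
      (C (vdCofactor i x) * nodal (univ.erase i) x).eval t := by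
    simp [vd_update]
  rw [pd_pd_eq_eval_derivative_derivative hslice, pd_eq_eval_derivative hslice]
  simp only [derivative_C_mul, eval_mul, eval_C, Function.iterate_succ_apply,
    Function.iterate_zero_apply]
  ring

theorem continuous_squaredBesselGenerator_vd (c : ℝ) :
    Continuous (squaredBesselGenerator c (vd (n := n))) := by
  simp only [funext (squaredBesselGenerator_vd_eq_sum c)]
  refine continuous_finsetSum _ fun i _ => (continuous_vdCofactor i).mul ?_
  have h1 := continuous_eval_iterate_derivative_nodal (R := ℝ) (univ.erase i) i 1
  have h2 := continuous_eval_iterate_derivative_nodal (R := ℝ) (univ.erase i) i 2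
  simp only [Function.iterate_one] at h1
  fun_prop

theorem squaredBesselGenerator_vd_of_injective (c : ℝ) {x : Fin n → ℝ}
    (hx : Function.Injective x) : squaredBesselGenerator c vd x = 0 := by
  set P := nodal univ x
  let Q : ℝ[X] := (2 / 3 : ℝ) • derivative^[3] (P * X) + ((c - 4) / 2) • derivative^[2] P
  have hQ : Q.degree < ↑(#(univ : Finset (Fin n)) - 1) := by
    rw [card_univ, Fintype.card_fin]
    have hP : P.natDegree = n := by simp [P, natDegree_nodal]
    refine (degree_add_le _ _).trans_lt (max_lt ((degree_smul_le _ _).trans_lt ?_)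
      ((degree_smul_le _ _).trans_lt ?_))
    · exact degree_iterate_derivative_lt
        (natDegree_mul_le.trans_lt (by rw [hP, natDegree_X]; omega))
    · exact degree_iterate_derivative_lt (by rw [hP]; omega)
  have hterm : ∀ i, vdCofactor i x *
      (2 * x i * (derivative^[2] (nodal (univ.erase i) x)).eval (x i) +
        c * (derivative (nodal (univ.erase i) x)).eval (x i)) =
      vd x * (Q.eval (x i) / ∏ j ∈ univ.erase i, (x i - x j)) := by
    intro i
    set p := nodal (univ.erase i) x with hp
    have hd : p.eval (x i) ≠ 0 :=
      eval_nodal_not_at_node fun j hj => hx.ne (ne_of_mem_erase hj).symm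
    have hK : vdCofactor i x = vd x / p.eval (x i) := by
      rw [eq_div_iff hd, ← vd_update, Function.update_eq_self]
    rw [hK, ← eval_nodal, ← hp, eval_add, eval_smul, eval_smul, smul_eq_mul, smul_eq_mul,
      eval_iterate_derivative_three_nodal_mul_X_at_node (mem_univ i),
      eval_iterate_derivative_two_nodal_at_node (mem_univ i)]
    field_simp
    ring
  rw [squaredBesselGenerator_vd_eq_sum, sum_congr rfl fun i _ => hterm i, ← mul_sum,
    sum_eval_div_prod_sub_eq_zero hx.injOn hQ, mul_zero]

end Vandermonde

theorem squaredBessel_annihilates_vandermonde_general (n : ℕ) (c : ℝ)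
    (x : Fin n → ℝ) :
    ∑ i : Fin n, (2 * x i * pd i (pd i vd) x + c * pd i vd x) = 0 :=
  congrFun ((continuous_squaredBesselGenerator_vd c).ext_on dense_setOf_injective
    continuous_const fun _ hx => squaredBesselGenerator_vd_of_injective c hx) x

theorem squaredBessel_annihilates_vandermonde (n : ℕ) (hn : 1 ≤ n) (c : ℝ)
    (x : Fin n → ℝ) :
    ∑ i : Fin n, (2 * x i * pd i (pd i vd) x + c * pd i vd x) = 0 :=
  squaredBessel_annihilates_vandermonde_general n c x
end

section
/- Let n ≥ 1 and p, q be integers with n ≤ min{p, q}. The Vandermonde determinant Δ(x) = ∏_{1 ≤ i < j ≤ n} (x_i − x_j) is an eigenfunction of the operator J = ∑_{i=1}^n [2 x_i(1 − x_i) ∂_i² + 2((p − n + 1) − (p + q − 2n + 2) x_i) ∂_i] on (0,1)^n, with J Δ = −(n(n−1)(3p + 3q − 4n + 2)/3) Δ. -/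
/-!
Up to the constant sign `∏ j, (-1) ^ j`, `vd x` is the Vandermonde determinant `det (x i ^ j)`.
Row `i` of that matrix depends on `x i` alone and the determinant is linear in row `i`, so `∂ᵢ` and
`∂ᵢ²` act by differentiating the monomials in row `i`. Hence `∑ᵢ a(xᵢ) ∂ᵢ² + b(xᵢ) ∂ᵢ` sends the
determinant to `∑ᵢ det (V with row i replaced by ((T Xʲ)(xᵢ))ⱼ)`, where `T p = a p'' + b p'`. When
`deg a ≤ 2` and `deg b ≤ 1`, `T` is upper triangular on monomials: these rows are the rows of
`V * U` with `U` upper triangular of diagonal `a₂ j (j - 1) + b₁ j`. Expanding along row `i` with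
the adjugate, `∑ᵢ det (V with row i replaced by (V * U)ᵢ) = tr U * det V`.
-/

open Finset Function Matrix Polynomial

namespace Matrix

variable {ι R : Type*} [Fintype ι] [DecidableEq ι] [CommRing R]

theorem adjugate_updateRow_apply_self (A : Matrix ι ι R) (i k : ι) (r : ι → R) :
    adjugate (A.updateRow i r) k i = adjugate A k i := by
  rw [adjugate_apply, adjugate_apply, updateRow_idem]

theorem det_updateRow_eq_sum_mul_adjugate (A : Matrix ι ι R) (i : ι) (r : ι → R) :
    (A.updateRow i r).det = ∑ k, r k * adjugate A k i := by
  simp [det_eq_sum_mul_adjugate_row _ i, adjugate_updateRow_apply_self]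

theorem sum_det_updateRow_mul (A U : Matrix ι ι R) :
    ∑ i, (A.updateRow i ((A * U) i)).det = U.trace * A.det := by
  calc ∑ i, (A.updateRow i ((A * U) i)).det = (A * U * adjugate A).trace := by
        simp [det_updateRow_eq_sum_mul_adjugate, trace, mul_apply]
    _ = (adjugate A * A * U).trace := by rw [trace_mul_comm, Matrix.mul_assoc]
    _ = U.trace * A.det := by simp [adjugate_mul, trace_smul, mul_comm]

theorem vandermonde_update {n : ℕ} (x : Fin n → R) (i : Fin n) (t : R) :
    vandermonde (update x i t) = (vandermonde x).updateRow i fun j => t ^ (j : ℕ) := by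
  ext k j
  rcases eq_or_ne k i with rfl | hk
  · simp [vandermonde_apply]
  · simp [vandermonde_apply, hk]

end Matrix

namespace Polynomial

variable {R : Type*} [CommRing R]

noncomputable def secondOrderOp (a b p : R[X]) : R[X] :=
  a * derivative (derivative p) + b * derivative p

theorem secondOrderOp_X_pow_add_two (a b : R[X]) (j : ℕ) :
    secondOrderOp a b (X ^ (j + 2))
      = a * C ((j + 2) * (j + 1) : R) * X ^ j + b * C (j + 2 : R) * X ^ (j + 1) := by
  rw [secondOrderOp, derivative_X_pow, derivative_C_mul_X_pow, show j + 2 - 1 = j + 1 by omega,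
    Nat.add_sub_cancel]
  push_cast
  ring

theorem natDegree_secondOrderOp_X_pow_le {a b : R[X]} (ha : a.natDegree ≤ 2)
    (hb : b.natDegree ≤ 1) (j : ℕ) : (secondOrderOp a b (X ^ j)).natDegree ≤ j := by
  match j with
  | 0 => simp [secondOrderOp]
  | 1 => simpa [secondOrderOp] using hb
  | j + 2 =>
    rw [secondOrderOp_X_pow_add_two]
    refine natDegree_add_le_of_degree_le ?_ ?_
    · have := natDegree_mul_C_le a ((j + 2) * (j + 1) : R)
      have := natDegree_X_pow_le (R := R) j
      exact natDegree_mul_le.trans (by omega)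
    · have := natDegree_mul_C_le b (j + 2 : R)
      have := natDegree_X_pow_le (R := R) (j + 1)
      exact natDegree_mul_le.trans (by omega)

theorem coeff_secondOrderOp_X_pow_self (a b : R[X]) (j : ℕ) :
    (secondOrderOp a b (X ^ j)).coeff j = a.coeff 2 * j * (j - 1) + b.coeff 1 * j := by
  match j with
  | 0 => simp [secondOrderOp]
  | 1 => simp [secondOrderOp]
  | j + 2 =>
    rw [secondOrderOp_X_pow_add_two, coeff_add, add_comm j 2, coeff_mul_X_pow, add_comm 2 j,
      show j + 2 = 1 + (j + 1) by ring, coeff_mul_X_pow]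
    simp only [coeff_mul_C]
    push_cast
    ring

end Polynomial

section

variable {n : ℕ}

theorem pd_det_updateRow_vandermonde (ψ : Fin n → ℝ[X]) (i : Fin n) (x : Fin n → ℝ) :
    pd i (fun y => ((vandermonde y).updateRow i fun j => (ψ j).eval (y i)).det) x
      = ((vandermonde x).updateRow i fun j => (ψ j).derivative.eval (x i)).det := by
  simp only [pd, update_self, vandermonde_update, updateRow_idem,
    det_updateRow_eq_sum_mul_adjugate]
  exact (HasDerivAt.fun_sum fun k _ => (Polynomial.hasDerivAt (ψ k) (x i)).mul_const _).deriv

theorem pd_det_vandermonde (i : Fin n) :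
    pd i (fun y => (vandermonde y).det)
      = fun y => ((vandermonde y).updateRow i
          fun j => (X ^ (j : ℕ)).derivative.eval (y i)).det := by
  funext x
  rw [← pd_det_updateRow_vandermonde]
  congr 1
  funext y
  congr 1
  simp only [eval_pow, eval_X]
  exact (updateRow_eq_self (vandermonde y) i).symm

theorem pd_pd_det_vandermonde (i : Fin n) (x : Fin n → ℝ) :
    pd i (pd i fun y => (vandermonde y).det) x
      = ((vandermonde x).updateRow i
          fun j => (X ^ (j : ℕ)).derivative.derivative.eval (x i)).det := by
  rw [pd_det_vandermonde, pd_det_updateRow_vandermonde]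

theorem sum_det_updateRow_vandermonde (ψ : Fin n → ℝ[X]) (hψ : ∀ j, (ψ j).natDegree < n)
    (x : Fin n → ℝ) :
    ∑ i, ((vandermonde x).updateRow i fun j => (ψ j).eval (x i)).det
      = (∑ j, (ψ j).coeff j) * (vandermonde x).det := by
  have hrow : ∀ i, (fun j => (ψ j).eval (x i))
      = (vandermonde x * of fun (k j : Fin n) => (ψ j).coeff k) i := by
    intro i
    funext j
    rw [eval_eq_sum_range' (hψ j), ← Fin.sum_univ_eq_sum_range]
    simp [mul_apply, mul_comm]
  simp only [hrow, sum_det_updateRow_mul, trace, Matrix.diag, of_apply]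

theorem vd_eq_mul_det_vandermonde (x : Fin n → ℝ) :
    vd x = (∏ j : Fin n, (-1 : ℝ) ^ (j : ℕ)) * (vandermonde x).det := by
  have hneg : vandermonde (-x) = vandermonde x * diagonal fun j : Fin n => (-1 : ℝ) ^ (j : ℕ) := by
    ext i j
    rw [mul_diagonal, vandermonde_apply, vandermonde_apply, Pi.neg_apply, neg_pow, mul_comm]
  rw [mul_comm, ← det_diagonal, ← det_mul, ← hneg, det_vandermonde, vd]
  simp only [Pi.neg_apply, neg_sub_neg]

theorem pd_const_mul (i : Fin n) (c : ℝ) (f : (Fin n → ℝ) → ℝ) :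
    pd i (fun y => c * f y) = fun y => c * pd i f y := by
  funext x
  exact deriv_const_mul_field c

theorem sum_pd_vd_secondOrder (a b : ℝ[X]) (ha : a.natDegree ≤ 2) (hb : b.natDegree ≤ 1)
    (x : Fin n → ℝ) :
    ∑ i, (a.eval (x i) * pd i (pd i vd) x + b.eval (x i) * pd i vd x)
      = (∑ j : Fin n, (a.coeff 2 * j * (j - 1) + b.coeff 1 * j)) * vd x := by
  set c : ℝ := ∏ j : Fin n, (-1 : ℝ) ^ (j : ℕ)
  have hvd : vd = fun y => c * (vandermonde y).det := funext vd_eq_mul_det_vandermonde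
  have hrow : ∀ i, a.eval (x i) * pd i (pd i vd) x + b.eval (x i) * pd i vd x
      = c * ((vandermonde x).updateRow i
          fun j => (secondOrderOp a b (X ^ (j : ℕ))).eval (x i)).det := by
    intro i
    have hsplit : (fun j : Fin n => (secondOrderOp a b (X ^ (j : ℕ))).eval (x i))
        = a.eval (x i) • (fun j : Fin n => (X ^ (j : ℕ)).derivative.derivative.eval (x i))
          + b.eval (x i) • fun j : Fin n => (X ^ (j : ℕ)).derivative.eval (x i) := by
      funext j
      simp [secondOrderOp]
    simp only [hvd, pd_const_mul]
    rw [pd_pd_det_vandermonde, pd_det_vandermonde, hsplit,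
      det_updateRow_add, det_updateRow_smul, det_updateRow_smul]
    ring
  rw [sum_congr rfl fun i _ => hrow i, ← mul_sum, sum_det_updateRow_vandermonde _
    fun j => (natDegree_secondOrderOp_X_pow_le ha hb j).trans_lt j.isLt, vd_eq_mul_det_vandermonde]
  simp only [coeff_secondOrderOp_X_pow_self]
  ring

end

theorem sum_range_mul_mul_sub_one_add_mul (α β : ℝ) (n : ℕ) :
    ∑ j ∈ range n, (α * j * (j - 1) + β * j) = n * (n - 1) * (2 * α * (n - 2) + 3 * β) / 6 := by
  induction n with
  | zero => simp
  | succ n ih =>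
    rw [sum_range_succ, ih]
    push_cast
    ring

theorem jacobi_eigenfunction_vandermonde_general (n : ℕ) (p q : ℤ)
    (x : Fin n → ℝ) :
    ∑ i : Fin n, (2 * x i * (1 - x i) * pd i (pd i vd) x
        + 2 * (((p:ℝ) - n + 1) - ((p:ℝ) + q - 2 * n + 2) * x i) * pd i vd x)
      = -((n:ℝ) * ((n:ℝ) - 1) * (3 * (p:ℝ) + 3 * (q:ℝ) - 4 * (n:ℝ) + 2) / 3) * vd x := by
  set A : ℝ := p - n + 1
  set B : ℝ := p + q - 2 * n + 2
  have ha : (2 * X * (1 - X) : ℝ[X]).natDegree ≤ 2 := by compute_degree!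
  have hb : (2 * (C A - C B * X)).natDegree ≤ 1 := by compute_degree!
  have ha2 : (2 * X * (1 - X) : ℝ[X]).coeff 2 = -2 := by
    rw [show (2 * X * (1 - X) : ℝ[X]) = 2 * X - 2 * X ^ 2 by ring]
    simp [coeff_X]
  have hb1 : (2 * (C A - C B * X)).coeff 1 = -2 * B := by simp
  have h := sum_pd_vd_secondOrder _ _ ha hb x
  simp only [eval_mul, eval_sub, eval_ofNat, eval_X, eval_one, eval_C, ha2, hb1] at h
  rw [h, Fin.sum_univ_eq_sum_range (fun j => -2 * j * (j - 1) + -2 * B * j),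
    sum_range_mul_mul_sub_one_add_mul]
  ring

theorem jacobi_eigenfunction_vandermonde (n : ℕ) (p q : ℤ) (hn : 1 ≤ n)
    (hp : (n : ℤ) ≤ p) (hq : (n : ℤ) ≤ q)
    (x : Fin n → ℝ) (hx : ∀ i, x i ∈ Set.Ioo (0:ℝ) 1) :
    ∑ i : Fin n, (2 * x i * (1 - x i) * pd i (pd i vd) x
        + 2 * (((p:ℝ) - n + 1) - ((p:ℝ) + q - 2 * n + 2) * x i) * pd i vd x)
      = -((n:ℝ) * ((n:ℝ) - 1) * (3 * (p:ℝ) + 3 * (q:ℝ) - 4 * (n:ℝ) + 2) / 3) * vd x :=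
  jacobi_eigenfunction_vandermonde_general n p q x
end

section
/- Let n ≥ 1 and let L denote the operator ∑_{i=1}^n (2 x_i ∂_i² + c ∂_i) on functions of x ∈ ℝ^n. Then for every smooth function f and every x with pairwise distinct coordinates, L(Δ f)(x) = Δ(x) · [L f(x) + ∑_{i=1}^n ∑_{j ≠ i} (4 x_i / (x_i − x_j)) ∂_i f(x)], i.e., conjugation of L by the Vandermonde determinant Δ produces exactly the singular drift term of the Laguerre eigenvalues process. -/
open Finset Function

lemma pd_pd_eq {n : ℕ} (i : Fin n) (h : (Fin n → ℝ) → ℝ) (x : Fin n → ℝ) :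
    pd i (pd i h) x = deriv (deriv (fun t => h (Function.update x i t))) (x i) := by
  unfold pd
  congr 1
  funext t
  simp [Function.update_idem]

lemma vd_split {n : ℕ} (i : Fin n) (z : Fin n → ℝ) :
    vd z = (∏ j ∈ Finset.univ.erase i, (if i < j then z i - z j else z j - z i)) *
      ∏ a ∈ Finset.univ.erase i, ∏ b ∈ (Finset.Ioi a).erase i, (z a - z b) := by
  unfold vd
  rw [← Finset.mul_prod_erase Finset.univ _ (Finset.mem_univ i)]
  have h1 : ∀ a ∈ Finset.univ.erase i, (∏ b ∈ Finset.Ioi a, (z a - z b)) =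
      (if a < i then z a - z i else 1) * ∏ b ∈ (Finset.Ioi a).erase i, (z a - z b) := by
    intro a _
    by_cases hai : a < i
    · rw [if_pos hai, ← Finset.mul_prod_erase (Finset.Ioi a) _ (Finset.mem_Ioi.2 hai)]
    · rw [if_neg hai, one_mul, Finset.erase_eq_of_notMem]
      simpa using hai
  rw [Finset.prod_congr rfl h1, Finset.prod_mul_distrib, ← mul_assoc]
  congr 1
  have he : Finset.univ.erase i = Finset.Iio i ∪ Finset.Ioi i := by
    ext j
    simp only [Finset.mem_erase, Finset.mem_univ, and_true, Finset.mem_union, Finset.mem_Iio,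
      Finset.mem_Ioi]
    exact ⟨fun h => h.lt_or_gt, fun h => h.elim (fun h => h.ne) (fun h => h.ne')⟩
  have hdisj : Disjoint (Finset.Iio i) (Finset.Ioi i) := by
    rw [Finset.disjoint_left]
    intro a ha hb
    exact absurd ((Finset.mem_Iio.1 ha).trans (Finset.mem_Ioi.1 hb)) (lt_irrefl _)
  have hIio : ∏ j ∈ Finset.Iio i, (if i < j then z i - z j else z j - z i)
      = ∏ j ∈ Finset.Iio i, (z j - z i) :=
    Finset.prod_congr rfl fun j hj => if_neg (asymm (Finset.mem_Iio.1 hj))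
  have hIoi : ∏ j ∈ Finset.Ioi i, (if i < j then z i - z j else z j - z i)
      = ∏ j ∈ Finset.Ioi i, (z i - z j) :=
    Finset.prod_congr rfl fun j hj => if_pos (Finset.mem_Ioi.1 hj)
  have hfil : ∏ a ∈ Finset.univ.erase i, (if a < i then z a - z i else 1)
      = ∏ a ∈ Finset.Iio i, (z a - z i) := by
    rw [← Finset.prod_filter]
    congr 1
    ext j
    simp only [Finset.mem_filter, Finset.mem_erase, Finset.mem_univ, true_and, Finset.mem_Iio,
      and_iff_right_iff_imp]
    exact fun h => ⟨h.ne, trivial⟩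
  rw [hfil, he, Finset.prod_union hdisj, hIio, hIoi, mul_comm]

lemma vd_update_s6 {n : ℕ} (i : Fin n) (x : Fin n → ℝ)
    (hx : ∀ j, j ≠ i → x i - x j ≠ 0) (t : ℝ) :
    vd (Function.update x i t)
      = vd x * ∏ j ∈ Finset.univ.erase i, ((t - x j) * (x i - x j)⁻¹) := by
  rw [vd_split i (Function.update x i t), vd_split i x]
  have hR : (∏ a ∈ Finset.univ.erase i, ∏ b ∈ (Finset.Ioi a).erase i,
        (Function.update x i t a - Function.update x i t b))
      = ∏ a ∈ Finset.univ.erase i, ∏ b ∈ (Finset.Ioi a).erase i, (x a - x b) := by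
    refine Finset.prod_congr rfl fun a ha => Finset.prod_congr rfl fun b hb => ?_
    rw [Function.update_of_ne (Finset.mem_erase.1 ha).1, Function.update_of_ne
      (Finset.mem_erase.1 hb).1]
  rw [hR]
  have hA : (∏ j ∈ Finset.univ.erase i, (if i < j then Function.update x i t i -
        Function.update x i t j else Function.update x i t j - Function.update x i t i))
      = ∏ j ∈ Finset.univ.erase i,
          ((if i < j then x i - x j else x j - x i) * ((t - x j) * (x i - x j)⁻¹)) := by
    refine Finset.prod_congr rfl fun j hj => ?_
    have hji : j ≠ i := (Finset.mem_erase.1 hj).1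
    rw [Function.update_self, Function.update_of_ne hji]
    have h0 : x i - x j ≠ 0 := hx j hji
    by_cases hij : i < j
    · rw [if_pos hij, if_pos hij]
      field_simp
    · rw [if_neg hij, if_neg hij]
      field_simp
      ring
  rw [hA, Finset.prod_mul_distrib]
  ring

lemma I1 {n : ℕ} (x : Fin n → ℝ) (hx : ∀ i j, i ≠ j → x i ≠ x j) :
    ∑ i : Fin n, ∑ j ∈ Finset.univ.erase i, (x i - x j)⁻¹ = 0 := by
  have hswap : ∑ i : Fin n, ∑ j ∈ Finset.univ.erase i, (x i - x j)⁻¹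
      = ∑ i : Fin n, ∑ j ∈ Finset.univ.erase i, (x j - x i)⁻¹ := by
    refine Finset.sum_comm' fun a b => ?_
    simp [Finset.mem_erase, ne_comm, and_comm]
  have hneg : ∑ i : Fin n, ∑ j ∈ Finset.univ.erase i, (x j - x i)⁻¹
      = - ∑ i : Fin n, ∑ j ∈ Finset.univ.erase i, (x i - x j)⁻¹ := by
    rw [← Finset.sum_neg_distrib]
    refine Finset.sum_congr rfl fun i _ => ?_
    rw [← Finset.sum_neg_distrib]
    refine Finset.sum_congr rfl fun j _ => ?_
    rw [← inv_neg, neg_sub]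
  have := hswap.trans hneg
  linarith

lemma three_term (a b c : ℝ) (hab : a ≠ b) (hac : a ≠ c) (hbc : b ≠ c) :
    a * ((a - c)⁻¹ * (a - b)⁻¹) + b * ((b - a)⁻¹ * (b - c)⁻¹)
      + c * ((c - b)⁻¹ * (c - a)⁻¹) = 0 := by
  have h1 : a - b ≠ 0 := sub_ne_zero.2 hab
  have h2 : a - c ≠ 0 := sub_ne_zero.2 hac
  have h3 : b - c ≠ 0 := sub_ne_zero.2 hbc
  have h4 : b - a ≠ 0 := sub_ne_zero.2 hab.symm
  have h5 : c - a ≠ 0 := sub_ne_zero.2 hac.symm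
  have h6 : c - b ≠ 0 := sub_ne_zero.2 hbc.symm
  field_simp
  ring

lemma I2 {n : ℕ} (x : Fin n → ℝ) (hx : ∀ i j, i ≠ j → x i ≠ x j) :
    ∑ i : Fin n, x i * ∑ j ∈ Finset.univ.erase i,
      (∑ k ∈ (Finset.univ.erase i).erase j, (x i - x k)⁻¹) * (x i - x j)⁻¹ = 0 := by
  classical
  set H : Fin n × Fin n × Fin n → ℝ :=
    fun p => x p.1 * ((x p.1 - x p.2.2)⁻¹ * (x p.1 - x p.2.1)⁻¹) with hH
  set T : Finset (Fin n × Fin n × Fin n) :=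
    Finset.univ.filter (fun p => p.1 ≠ p.2.1 ∧ p.1 ≠ p.2.2 ∧ p.2.1 ≠ p.2.2) with hT
  have hmemT : ∀ p : Fin n × Fin n × Fin n,
      p ∈ T ↔ p.1 ≠ p.2.1 ∧ p.1 ≠ p.2.2 ∧ p.2.1 ≠ p.2.2 := by
    intro p; simp [hT]
  have hconv : ∑ i : Fin n, x i * ∑ j ∈ Finset.univ.erase i,
      (∑ k ∈ (Finset.univ.erase i).erase j, (x i - x k)⁻¹) * (x i - x j)⁻¹
      = ∑ p ∈ T, H p := by
    rw [hT, Finset.sum_filter, Fintype.sum_prod_type]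
    refine Finset.sum_congr rfl fun i _ => ?_
    rw [Fintype.sum_prod_type]
    have h0 : (∑ k : Fin n, if i ≠ i ∧ i ≠ k ∧ i ≠ k then H (i, i, k) else 0) = 0 := by
      simp
    rw [show (∑ j : Fin n, ∑ k : Fin n, if i ≠ j ∧ i ≠ k ∧ j ≠ k then H (i, j, k) else 0)
        = ∑ j ∈ Finset.univ.erase i, ∑ k : Fin n,
            if i ≠ j ∧ i ≠ k ∧ j ≠ k then H (i, j, k) else 0 from
      (Finset.sum_erase _ (by simp)).symm]
    rw [Finset.mul_sum]
    refine Finset.sum_congr rfl fun j hj => ?_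
    have hij : i ≠ j := fun h => (Finset.mem_erase.1 hj).1 h.symm
    have hite : ∀ k : Fin n, (if i ≠ j ∧ i ≠ k ∧ j ≠ k then H (i, j, k) else 0)
        = if k ∈ (Finset.univ.erase i).erase j
            then x i * ((x i - x k)⁻¹ * (x i - x j)⁻¹) else 0 := by
      intro k
      by_cases h2 : i = k
      · subst h2
        simp [Finset.mem_erase, hij]
      · by_cases h3 : j = k
        · subst h3
          simp [Finset.mem_erase]
        · simp [Finset.mem_erase, hij, h2, h3, Ne.symm h2, Ne.symm h3, hH]
    rw [Finset.sum_congr rfl fun k _ => hite k, Finset.sum_ite_mem, Finset.univ_inter,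
      Finset.sum_mul, Finset.mul_sum]
  set e : (Fin n × Fin n × Fin n) ≃ (Fin n × Fin n × Fin n) :=
    ⟨fun p => (p.2.1, p.2.2, p.1), fun p => (p.2.2, p.1, p.2.1),
      fun ⟨a, b, c⟩ => rfl, fun ⟨a, b, c⟩ => rfl⟩ with he
  have heT : ∀ p, p ∈ T ↔ e p ∈ T := by
    intro p
    simp only [hmemT, he, Equiv.coe_fn_mk]
    constructor
    · rintro ⟨h1, h2, h3⟩; exact ⟨h3, fun h => h1 h.symm, fun h => h2 h.symm⟩
    · rintro ⟨h1, h2, h3⟩; exact ⟨fun h => h2 h.symm, fun h => h3 h.symm, h1⟩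
  have hrot : ∑ p ∈ T, H (e p) = ∑ p ∈ T, H p :=
    Finset.sum_equiv e heT (fun p _ => rfl)
  have hrot2 : ∑ p ∈ T, H (e (e p)) = ∑ p ∈ T, H (e p) :=
    Finset.sum_equiv e heT (fun p _ => rfl)
  have h3 : ∑ p ∈ T, (H p + H (e p) + H (e (e p))) = 0 := by
    refine Finset.sum_eq_zero fun p hp => ?_
    obtain ⟨a, b, cc⟩ := p
    obtain ⟨h1, h2, h3⟩ := (hmemT _).1 hp
    simp only [hH, he, Equiv.coe_fn_mk]
    exact three_term (x a) (x b) (x cc) (hx _ _ h1) (hx _ _ h2) (hx _ _ h3)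
  rw [Finset.sum_add_distrib, Finset.sum_add_distrib, hrot2, hrot] at h3
  rw [hconv]
  linarith

lemma key {n : ℕ} (i : Fin n) (f : (Fin n → ℝ) → ℝ) (hf : ContDiff ℝ (⊤ : ℕ∞) f)
    (x : Fin n → ℝ) (hx : ∀ a b, a ≠ b → x a ≠ x b) :
    pd i (fun z => vd z * f z) x
      = vd x * ((∑ j ∈ Finset.univ.erase i, (x i - x j)⁻¹) * f x + pd i f x) ∧
    pd i (pd i (fun z => vd z * f z)) x
      = vd x * ((∑ j ∈ Finset.univ.erase i,
            (∑ k ∈ (Finset.univ.erase i).erase j, (x i - x k)⁻¹) * (x i - x j)⁻¹) * f x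
          + 2 * (∑ j ∈ Finset.univ.erase i, (x i - x j)⁻¹) * pd i f x
          + pd i (pd i f) x) := by
  classical
  set s := Finset.univ.erase i with hs
  have hxj : ∀ j ∈ s, x i - x j ≠ 0 := fun j hj =>
    sub_ne_zero.2 (hx i j fun h => (Finset.mem_erase.1 hj).1 h.symm)
  set g : ℝ → ℝ := fun t => f (Function.update x i t) with hg
  have hgc : ContDiff ℝ (⊤ : ℕ∞) g := hf.comp (contDiff_update ((⊤ : ℕ∞) : WithTop ℕ∞) x i)
  obtain ⟨hgd, hgc'⟩ := contDiff_infty_iff_deriv.1 (hgc.of_le (by simp))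
  have hgd' : Differentiable ℝ (deriv g) := hgc'.differentiable (by simp)
  set q : ℝ → ℝ := fun t => ∏ j ∈ s, ((t - x j) * (x i - x j)⁻¹) with hq
  set q1 : ℝ → ℝ := fun t =>
    ∑ j ∈ s, (∏ k ∈ s.erase j, ((t - x k) * (x i - x k)⁻¹)) * (x i - x j)⁻¹ with hq1
  set q2 : ℝ → ℝ := fun t =>
    ∑ j ∈ s, (∑ k ∈ s.erase j,
      (∏ l ∈ (s.erase j).erase k, ((t - x l) * (x i - x l)⁻¹)) * (x i - x k)⁻¹)
        * (x i - x j)⁻¹ with hq2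
  have hfac : ∀ (j : Fin n) (t : ℝ),
      HasDerivAt (fun y => (y - x j) * (x i - x j)⁻¹) ((x i - x j)⁻¹) t := by
    intro j t
    simpa using ((hasDerivAt_id t).sub_const (x j)).mul_const ((x i - x j)⁻¹)
  have hdq : ∀ t, HasDerivAt q (q1 t) t := by
    intro t
    have h := HasDerivAt.fun_finsetProd (u := s)
      (f := fun j y => (y - x j) * (x i - x j)⁻¹)
      (f' := fun j => (x i - x j)⁻¹) (x := t) (fun j _ => hfac j t)
    simpa [smul_eq_mul] using h
  have hdq1 : ∀ t, HasDerivAt q1 (q2 t) t := by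
    intro t
    refine HasDerivAt.fun_sum fun j hj => ?_
    have h := HasDerivAt.fun_finsetProd (u := s.erase j)
      (f := fun k y => (y - x k) * (x i - x k)⁻¹)
      (f' := fun k => (x i - x k)⁻¹) (x := t) (fun k _ => hfac k t)
    simpa [smul_eq_mul] using h.mul_const ((x i - x j)⁻¹)
  have hprod1 : ∀ u : Finset (Fin n), u ⊆ s →
      ∏ l ∈ u, ((x i - x l) * (x i - x l)⁻¹) = 1 := fun u hu =>
    Finset.prod_eq_one fun l hl => mul_inv_cancel₀ (hxj l (hu hl))
  have hqx : q (x i) = 1 := hprod1 s (subset_refl s)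
  have hq1x : q1 (x i) = ∑ j ∈ s, (x i - x j)⁻¹ := by
    refine Finset.sum_congr rfl fun j hj => ?_
    rw [hprod1 _ (Finset.erase_subset _ _), one_mul]
  have hq2x : q2 (x i) = ∑ j ∈ s, (∑ k ∈ s.erase j, (x i - x k)⁻¹) * (x i - x j)⁻¹ := by
    refine Finset.sum_congr rfl fun j hj => ?_
    congr 1
    refine Finset.sum_congr rfl fun k hk => ?_
    rw [hprod1 _ ((Finset.erase_subset _ _).trans (Finset.erase_subset _ _)), one_mul]
  have hGf : (fun t => vd (Function.update x i t) * f (Function.update x i t))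
      = fun t => (vd x * q t) * g t := by
    funext t
    rw [vd_update_s6 i x (fun j hj => sub_ne_zero.2 (hx i j (Ne.symm hj))) t]
  have hG1 : ∀ t, HasDerivAt (fun t => (vd x * q t) * g t)
      (vd x * q1 t * g t + (vd x * q t) * deriv g t) t := fun t =>
    (((hdq t).const_mul (vd x)).mul ((hgd t).hasDerivAt))
  have hgx : g (x i) = f x := by rw [hg]; simp
  have hdgx : deriv g (x i) = pd i f x := rfl
  constructor
  · show deriv (fun t => vd (Function.update x i t) * f (Function.update x i t)) (x i) = _
    rw [hGf, (hG1 (x i)).deriv, hqx, hq1x, hgx, hdgx]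
    ring
  · rw [pd_pd_eq]
    have : (fun t => (fun z => vd z * f z) (Function.update x i t))
        = fun t => (vd x * q t) * g t := hGf
    rw [this]
    have hderivG : deriv (fun t => (vd x * q t) * g t)
        = fun t => vd x * q1 t * g t + (vd x * q t) * deriv g t :=
      funext fun t => (hG1 t).deriv
    rw [hderivG]
    have hG2 : HasDerivAt (fun t => vd x * q1 t * g t + (vd x * q t) * deriv g t)
        (vd x * q2 (x i) * g (x i) + vd x * q1 (x i) * deriv g (x i)
          + (vd x * q1 (x i) * deriv g (x i) + (vd x * q (x i)) * deriv (deriv g) (x i)))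
        (x i) := by
      exact ((((hdq1 (x i)).const_mul (vd x)).mul ((hgd (x i)).hasDerivAt)).add
        ((((hdq (x i)).const_mul (vd x))).mul ((hgd' (x i)).hasDerivAt)))
    rw [hG2.deriv, hqx, hq1x, hq2x, hgx, hdgx]
    have : deriv (deriv g) (x i) = pd i (pd i f) x := (pd_pd_eq i f x).symm
    rw [this]
    ring


theorem laguerre_conjugation_identity (n : ℕ) (hn : 1 ≤ n) (c : ℝ)
    (f : (Fin n → ℝ) → ℝ) (hf : ContDiff ℝ (⊤ : ℕ∞) f)
    (x : Fin n → ℝ) (hx : ∀ i j, i ≠ j → x i ≠ x j) :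
    ∑ i : Fin n, (2 * x i * pd i (pd i (fun z => vd z * f z)) x
        + c * pd i (fun z => vd z * f z) x)
      = vd x * ((∑ i : Fin n, (2 * x i * pd i (pd i f) x + c * pd i f x))
          + ∑ i : Fin n, ∑ j ∈ Finset.univ.erase i,
              (4 * x i / (x i - x j)) * pd i f x) := by
  classical
  have hkey := fun i => key i f hf x hx
  have hL : ∑ i : Fin n, (2 * x i * pd i (pd i (fun z => vd z * f z)) x
        + c * pd i (fun z => vd z * f z) x)
      = ∑ i : Fin n, (vd x * (2 * x i *
          ((∑ j ∈ Finset.univ.erase i,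
              (∑ k ∈ (Finset.univ.erase i).erase j, (x i - x k)⁻¹) * (x i - x j)⁻¹) * f x
            + 2 * (∑ j ∈ Finset.univ.erase i, (x i - x j)⁻¹) * pd i f x
            + pd i (pd i f) x)
          + c * ((∑ j ∈ Finset.univ.erase i, (x i - x j)⁻¹) * f x + pd i f x))) := by
    refine Finset.sum_congr rfl fun i _ => ?_
    rw [(hkey i).1, (hkey i).2]
    ring
  rw [hL]
  have hD : ∀ i : Fin n, ∑ j ∈ Finset.univ.erase i, (4 * x i / (x i - x j)) * pd i f x
      = 4 * x i * pd i f x * (∑ j ∈ Finset.univ.erase i, (x i - x j)⁻¹) := by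
    intro i
    rw [Finset.mul_sum]
    refine Finset.sum_congr rfl fun j _ => ?_
    rw [div_eq_mul_inv]; ring
  rw [Finset.sum_congr rfl fun i _ => hD i]
  have h1 : ∑ i : Fin n, ∑ j ∈ Finset.univ.erase i, (x i - x j)⁻¹ = 0 := I1 x hx
  have h2 : ∑ i : Fin n, x i * ∑ j ∈ Finset.univ.erase i,
      (∑ k ∈ (Finset.univ.erase i).erase j, (x i - x k)⁻¹) * (x i - x j)⁻¹ = 0 := I2 x hx
  have expand : ∑ i : Fin n, (vd x * (2 * x i *
          ((∑ j ∈ Finset.univ.erase i,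
              (∑ k ∈ (Finset.univ.erase i).erase j, (x i - x k)⁻¹) * (x i - x j)⁻¹) * f x
            + 2 * (∑ j ∈ Finset.univ.erase i, (x i - x j)⁻¹) * pd i f x
            + pd i (pd i f) x)
          + c * ((∑ j ∈ Finset.univ.erase i, (x i - x j)⁻¹) * f x + pd i f x)))
      = (2 * vd x * f x) * (∑ i : Fin n, x i * ∑ j ∈ Finset.univ.erase i,
            (∑ k ∈ (Finset.univ.erase i).erase j, (x i - x k)⁻¹) * (x i - x j)⁻¹)
        + (c * vd x * f x) * (∑ i : Fin n, ∑ j ∈ Finset.univ.erase i, (x i - x j)⁻¹)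
        + (vd x * (∑ i : Fin n, (2 * x i * pd i (pd i f) x + c * pd i f x))
           + vd x * (∑ i : Fin n, 4 * x i * pd i f x
              * (∑ j ∈ Finset.univ.erase i, (x i - x j)⁻¹))) := by
    rw [Finset.mul_sum, Finset.mul_sum, Finset.mul_sum, Finset.mul_sum,
      ← Finset.sum_add_distrib, ← Finset.sum_add_distrib, ← Finset.sum_add_distrib]
    exact Finset.sum_congr rfl fun i _ => by ring
  rw [expand, h1, h2]
  ring
end

section
/- Let n ≥ 1, p, q integers with n ≤ min{p,q}, and let J = ∑_{i=1}^n [2 x_i(1−x_i) ∂_i² + 2((p−n+1) − (p+q−2n+2) x_i) ∂_i]. Then for every smooth f and every x ∈ (0,1)^n with pairwise distinct coordinates, J(Δ f)(x) = Δ(x)·[J f(x) + ∑_{i=1}^n ∑_{j≠i} (4 x_i(1−x_i)/(x_i−x_j)) ∂_i f(x) − (n(n−1)(3p+3q−4n+2)/3) f(x)]. -/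
open Finset Function

namespace JacobiAux

variable {n : ℕ}

/-- the set of ordered pairs i < j -/
def P (n : ℕ) : Finset (Fin n × Fin n) := Finset.univ.filter fun p => p.1 < p.2

lemma mem_P {p : Fin n × Fin n} : p ∈ P n ↔ p.1 < p.2 := by simp [P]

lemma sumP (h : Fin n × Fin n → ℝ) :
    ∑ p ∈ P n, h p = ∑ i : Fin n, ∑ j ∈ Finset.Ioi i, h (i, j) := by
  rw [P, Finset.sum_filter, ← Finset.univ_product_univ, Finset.sum_product]
  refine Finset.sum_congr rfl fun a _ => ?_
  rw [← Finset.filter_lt_eq_Ioi, Finset.sum_filter]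


lemma prodP (h : Fin n × Fin n → ℝ) :
    ∏ p ∈ P n, h p = ∏ i : Fin n, ∏ j ∈ Finset.Ioi i, h (i, j) := by
  rw [P, Finset.prod_filter, ← Finset.univ_product_univ, Finset.prod_product]
  refine Finset.prod_congr rfl fun a _ => ?_
  rw [← Finset.filter_lt_eq_Ioi, Finset.prod_filter]


lemma vd_eq (y : Fin n → ℝ) : vd y = ∏ p ∈ P n, (y p.1 - y p.2) := by
  rw [prodP]; rfl
section Deriv

variable (x : Fin n → ℝ) (i : Fin n)

/-- derivative weight of the pair factor -/
def dw (i : Fin n) (p : Fin n × Fin n) : ℝ :=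
  (if p.1 = i then 1 else 0) - (if p.2 = i then 1 else 0)

lemma hasDerivAt_coord (a : Fin n) (t : ℝ) :
    HasDerivAt (fun s => Function.update x i s a) (if a = i then 1 else 0) t := by
  simp only [Function.update_apply]
  split_ifs with h
  · exact hasDerivAt_id t
  · exact hasDerivAt_const t (x a)

lemma hasDerivAt_factor (p : Fin n × Fin n) (t : ℝ) :
    HasDerivAt (fun s => Function.update x i s p.1 - Function.update x i s p.2)
      (dw i p) t :=
  (hasDerivAt_coord x i p.1 t).sub (hasDerivAt_coord x i p.2 t)

lemma hasDerivAt_vd (t : ℝ) :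
    HasDerivAt (fun s => vd (Function.update x i s))
      (∑ p ∈ P n, (∏ q ∈ (P n).erase p,
        (Function.update x i t q.1 - Function.update x i t q.2)) * dw i p) t := by
  have h := HasDerivAt.fun_finsetProd (u := P n)
    (f := fun p s => Function.update x i s p.1 - Function.update x i s p.2)
    (f' := fun p => dw i p) (x := t) (fun p _ => hasDerivAt_factor x i p t)
  simp only [smul_eq_mul] at h
  rw [show (fun s => vd (Function.update x i s)) = fun s => ∏ p ∈ P n,
    (Function.update x i s p.1 - Function.update x i s p.2) from funext fun s => JacobiAux.vd_eq _]
  exact h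

noncomputable def vd1 (x : Fin n → ℝ) (i : Fin n) (t : ℝ) : ℝ :=
  ∑ p ∈ P n, (∏ q ∈ (P n).erase p,
    (Function.update x i t q.1 - Function.update x i t q.2)) * dw i p

lemma hasDerivAt_vd1 (t : ℝ) :
    HasDerivAt (vd1 x i)
      (∑ p ∈ P n, (∑ q ∈ (P n).erase p, (∏ r ∈ ((P n).erase p).erase q,
        (Function.update x i t r.1 - Function.update x i t r.2)) * dw i q) * dw i p) t := by
  apply HasDerivAt.fun_sum
  intro p _
  exact (HasDerivAt.fun_finsetProd (fun q _ => hasDerivAt_factor x i q t)).mul_const (dw i p) |>.congr_deriv (by simp [smul_eq_mul])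

end Deriv

section PD

variable (x : Fin n → ℝ) (i : Fin n)

lemma pd_apply (g : (Fin n → ℝ) → ℝ) : pd i g x = deriv (fun t => g (Function.update x i t)) (x i) := rfl

lemma pd_update_fun (g : (Fin n → ℝ) → ℝ) :
    (fun t => pd i g (Function.update x i t)) = deriv (fun t => g (Function.update x i t)) := by
  funext t
  simp only [pd, Function.update_idem, Function.update_self]

lemma pd_pd_eq (g : (Fin n → ℝ) → ℝ) :
    pd i (pd i g) x = deriv (deriv (fun t => g (Function.update x i t))) (x i) := by
  rw [pd_apply, pd_update_fun]

lemma deriv_vd_line : deriv (fun t => vd (Function.update x i t)) = vd1 x i := by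
  funext t
  exact (hasDerivAt_vd x i t).deriv

lemma pd_vd_eval : pd i vd x = vd1 x i (x i) := by
  rw [pd_apply, deriv_vd_line]

lemma pd_pd_vd_eval :
    pd i (pd i vd) x = ∑ p ∈ P n, (∑ q ∈ (P n).erase p, (∏ r ∈ ((P n).erase p).erase q,
      (x r.1 - x r.2)) * dw i q) * dw i p := by
  rw [pd_pd_eq, deriv_vd_line]
  have := (hasDerivAt_vd1 x i (x i)).deriv
  rw [this]
  simp [Function.update_eq_self]

end PD
section Classify

variable (x : Fin n → ℝ) (i : Fin n)

lemma erase_eq_Iio_union_Ioi : Finset.univ.erase i = Finset.Iio i ∪ Finset.Ioi i := by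
  ext a
  simp only [Finset.mem_erase, Finset.mem_univ, and_true, Finset.mem_union, Finset.mem_Iio,
    Finset.mem_Ioi]
  exact ne_iff_lt_or_gt

lemma sum_erase_split (r : Fin n → ℝ) :
    ∑ j ∈ Finset.univ.erase i, r j = (∑ j ∈ Finset.Iio i, r j) + ∑ j ∈ Finset.Ioi i, r j := by
  rw [erase_eq_Iio_union_Ioi, Finset.sum_union]
  simp only [Finset.disjoint_left, Finset.mem_Iio, Finset.mem_Ioi]
  exact fun a ha => not_lt.2 ha.le

lemma sum_dw_antisym (r : Fin n → Fin n → ℝ) (hr : ∀ a b, r b a = - r a b) :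
    ∑ p ∈ P n, dw i p * r p.1 p.2 = ∑ j ∈ Finset.univ.erase i, r i j := by
  rw [sumP]
  simp only [dw, sub_mul, ite_mul, one_mul, zero_mul]
  simp only [Finset.sum_sub_distrib]
  have h1 : ∑ a : Fin n, ∑ b ∈ Finset.Ioi a, (if a = i then r a b else 0)
      = ∑ b ∈ Finset.Ioi i, r i b := by
    have : ∀ a : Fin n, ∑ b ∈ Finset.Ioi a, (if a = i then r a b else 0)
        = if a = i then ∑ b ∈ Finset.Ioi a, r a b else 0 := by
      intro a; split_ifs <;> simp
    simp only [this]
    simp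
  have h2 : ∑ a : Fin n, ∑ b ∈ Finset.Ioi a, (if b = i then r a b else 0)
      = - ∑ a ∈ Finset.Iio i, r i a := by
    have : ∀ a : Fin n, ∑ b ∈ Finset.Ioi a, (if b = i then r a b else 0)
        = if a < i then r a i else 0 := by
      intro a
      rw [Finset.sum_ite_eq' (Finset.Ioi a) i (r a)]
      simp
    simp only [this]
    rw [← Finset.sum_filter, Finset.filter_gt_eq_Iio, ← Finset.sum_neg_distrib]
    exact Finset.sum_congr rfl fun a _ => by rw [hr]
  rw [h1, h2, sum_erase_split, sub_neg_eq_add, add_comm]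

lemma sum_dwsq_symm (r : Fin n → Fin n → ℝ) (hr : ∀ a b, r b a = r a b) :
    ∑ p ∈ P n, dw i p * dw i p * r p.1 p.2 = ∑ j ∈ Finset.univ.erase i, r i j := by
  rw [sumP]
  have key : ∀ a b : Fin n, a < b →
      dw i (a, b) * dw i (a, b) * r a b
        = (if a = i then r a b else 0) + (if b = i then r a b else 0) := by
    intro a b hab
    have hne : a ≠ b := ne_of_lt hab
    simp only [dw]
    rcases eq_or_ne a i with h1 | h1 <;> rcases eq_or_ne b i with h2 | h2 <;>
      simp_all
  have : ∀ a : Fin n, ∑ b ∈ Finset.Ioi a, dw i (a, b) * dw i (a, b) * r a b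
      = ∑ b ∈ Finset.Ioi a, ((if a = i then r a b else 0) + (if b = i then r a b else 0)) := by
    intro a
    exact Finset.sum_congr rfl fun b hb => key a b (Finset.mem_Ioi.1 hb)
  simp only [this, Finset.sum_add_distrib]
  have h1 : ∑ a : Fin n, ∑ b ∈ Finset.Ioi a, (if a = i then r a b else 0)
      = ∑ b ∈ Finset.Ioi i, r i b := by
    have h : ∀ a : Fin n, ∑ b ∈ Finset.Ioi a, (if a = i then r a b else 0)
        = if a = i then ∑ b ∈ Finset.Ioi a, r a b else 0 := by
      intro a; split_ifs <;> simp
    simp only [h]; simp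
  have h2 : ∑ a : Fin n, ∑ b ∈ Finset.Ioi a, (if b = i then r a b else 0)
      = ∑ a ∈ Finset.Iio i, r i a := by
    have h : ∀ a : Fin n, ∑ b ∈ Finset.Ioi a, (if b = i then r a b else 0)
        = if a < i then r a i else 0 := by
      intro a
      rw [Finset.sum_ite_eq' (Finset.Ioi a) i (r a)]
      simp
    simp only [h]
    rw [← Finset.sum_filter, Finset.filter_gt_eq_Iio]
    exact Finset.sum_congr rfl fun a _ => (hr a i).symm
  rw [h1, h2, sum_erase_split, add_comm]

end Classify

noncomputable def sI (x : Fin n → ℝ) (i : Fin n) : ℝ := ∑ j ∈ Finset.univ.erase i, (x i - x j)⁻¹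
noncomputable def tI (x : Fin n → ℝ) (i : Fin n) : ℝ := ∑ j ∈ Finset.univ.erase i, ((x i - x j)⁻¹) ^ 2

lemma offdiag_sum {α : Type*} [DecidableEq α] (s : Finset α) (e : α → ℝ) :
    ∑ p ∈ s, ∑ q ∈ s.erase p, e p * e q = (∑ p ∈ s, e p) ^ 2 - ∑ p ∈ s, e p ^ 2 := by
  have h : ∀ p ∈ s, ∑ q ∈ s.erase p, e p * e q = e p * (∑ q ∈ s, e q) - e p ^ 2 := by
    intro p hp
    rw [← Finset.mul_sum, Finset.sum_erase_eq_sub hp]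
    ring
  rw [Finset.sum_congr rfl h, Finset.sum_sub_distrib, ← Finset.sum_mul]
  ring

section Formulas

variable (x : Fin n → ℝ) (i : Fin n) (hx : ∀ i j : Fin n, i ≠ j → x i ≠ x j)

include hx

lemma F_ne (p : Fin n × Fin n) (hp : p ∈ P n) : x p.1 - x p.2 ≠ 0 :=
  sub_ne_zero.2 (hx _ _ (ne_of_lt (mem_P.1 hp)))

lemma prod_erase_F (p : Fin n × Fin n) (hp : p ∈ P n) :
    ∏ q ∈ (P n).erase p, (x q.1 - x q.2) = vd x * (x p.1 - x p.2)⁻¹ := by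
  have h := Finset.mul_prod_erase (P n) (fun q => x q.1 - x q.2) hp
  rw [← vd_eq] at h
  field_simp [F_ne x hx p hp]
  linear_combination h

lemma prod_erase2_F (p q : Fin n × Fin n) (hp : p ∈ P n) (hq : q ∈ (P n).erase p) :
    ∏ r ∈ ((P n).erase p).erase q, (x r.1 - x r.2)
      = vd x * ((x p.1 - x p.2)⁻¹ * (x q.1 - x q.2)⁻¹) := by
  have hq' : q ∈ P n := Finset.mem_of_mem_erase hq
  have h := Finset.mul_prod_erase ((P n).erase p) (fun r => x r.1 - x r.2) hq
  rw [prod_erase_F x hx p hp] at h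
  have h2 := F_ne x hx q hq'
  have h3 := F_ne x hx p hp
  field_simp at h ⊢
  linear_combination h

lemma pd_vd_formula : pd i vd x = vd x * sI x i := by
  rw [pd_vd_eval]
  have : vd1 x i (x i) = ∑ p ∈ P n, dw i p * (vd x * (x p.1 - x p.2)⁻¹) := by
    unfold vd1
    simp only [Function.update_eq_self]
    refine Finset.sum_congr rfl fun p hp => ?_
    rw [prod_erase_F x hx p hp]; ring
  rw [this, sum_dw_antisym i (fun a b => vd x * (x a - x b)⁻¹)
    (fun a b => by rw [← neg_sub, inv_neg]; ring), sI, Finset.mul_sum]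

lemma pd_pd_vd_formula : pd i (pd i vd) x = vd x * ((sI x i) ^ 2 - tI x i) := by
  rw [pd_pd_vd_eval]
  have step : ∑ p ∈ P n, (∑ q ∈ (P n).erase p, (∏ r ∈ ((P n).erase p).erase q,
      (x r.1 - x r.2)) * dw i q) * dw i p
      = vd x * ∑ p ∈ P n, ∑ q ∈ (P n).erase p,
          (dw i p * (x p.1 - x p.2)⁻¹) * (dw i q * (x q.1 - x q.2)⁻¹) := by
    rw [Finset.mul_sum]
    refine Finset.sum_congr rfl fun p hp => ?_
    rw [Finset.mul_sum, Finset.sum_mul]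
    refine Finset.sum_congr rfl fun q hq => ?_
    rw [prod_erase2_F x hx p q hp hq]; ring
  rw [step, offdiag_sum]
  have e1 : ∑ p ∈ P n, dw i p * (x p.1 - x p.2)⁻¹ = sI x i := by
    rw [sum_dw_antisym i (fun a b => (x a - x b)⁻¹)
      (fun a b => by rw [← neg_sub, inv_neg])]
    rfl
  have e2 : ∑ p ∈ P n, (dw i p * (x p.1 - x p.2)⁻¹) ^ 2 = tI x i := by
    have : ∀ p : Fin n × Fin n, (dw i p * (x p.1 - x p.2)⁻¹) ^ 2
        = dw i p * dw i p * ((x p.1 - x p.2)⁻¹) ^ 2 := fun p => by ring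
    simp only [this]
    rw [sum_dwsq_symm i (fun a b => ((x a - x b)⁻¹) ^ 2)
      (fun a b => by rw [← neg_sub (x a) (x b), inv_neg]; ring)]
    rfl
  rw [e1, e2]

end Formulas

section Smooth

variable (x : Fin n → ℝ) (i : Fin n) (f : (Fin n → ℝ) → ℝ)

lemma update_line_eq : (fun t : ℝ => Function.update x i t)
    = fun t => x + (t - x i) • (Pi.single i 1 : Fin n → ℝ) := by
  funext t a
  rcases eq_or_ne a i with h | h
  · subst h; simp
  · simp [Function.update_apply, Pi.single_apply, h]

lemma contDiff_update_line : ContDiff ℝ (⊤ : ℕ∞) (fun t : ℝ => Function.update x i t) := by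
  rw [update_line_eq]
  exact contDiff_const.add (((contDiff_id.sub contDiff_const).smul contDiff_const))

variable (hf : ContDiff ℝ (⊤ : ℕ∞) f)
include hf

lemma contDiff_line : ContDiff ℝ (⊤ : ℕ∞) (fun t : ℝ => f (Function.update x i t)) :=
  hf.comp (contDiff_update_line x i)

lemma diff_line : Differentiable ℝ (fun t : ℝ => f (Function.update x i t)) :=
  (contDiff_line x i f hf).differentiable (by simp)

lemma diff_deriv_line : Differentiable ℝ (deriv (fun t : ℝ => f (Function.update x i t))) := by
  have h : ContDiff ℝ ((⊤ : ℕ∞) : WithTop ℕ∞) (fun t : ℝ => f (Function.update x i t)) :=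
    (contDiff_line x i f hf).of_le (by simp)
  exact (contDiff_infty_iff_deriv.1 h).2.differentiable (by simp)

end Smooth

section Main

variable (x : Fin n → ℝ) (i : Fin n) (f : (Fin n → ℝ) → ℝ) (hf : ContDiff ℝ (⊤ : ℕ∞) f)
include hf

lemma pd_mul_formula :
    pd i (fun z => vd z * f z) x = pd i vd x * f x + vd x * pd i f x := by
  have hψ : HasDerivAt (fun t => f (Function.update x i t))
      (pd i f x) (x i) := (diff_line x i f hf (x i)).hasDerivAt
  have hφ := hasDerivAt_vd x i (x i)
  have hmul := hφ.fun_mul hψ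
  have : pd i (fun z => vd z * f z) x = deriv
      (fun t => vd (Function.update x i t) * f (Function.update x i t)) (x i) := rfl
  rw [this, hmul.deriv, pd_vd_eval, vd1]
  simp [Function.update_eq_self]

lemma pd_pd_mul_formula :
    pd i (pd i (fun z => vd z * f z)) x
      = pd i (pd i vd) x * f x + 2 * pd i vd x * pd i f x + vd x * pd i (pd i f) x := by
  set ψ := fun t => f (Function.update x i t) with hψdef
  have hdline : ∀ t, HasDerivAt ψ (deriv ψ t) t := fun t => (diff_line x i f hf t).hasDerivAt
  have hd1 : deriv (fun t => vd (Function.update x i t) * f (Function.update x i t))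
      = fun t => vd1 x i t * ψ t + vd (Function.update x i t) * deriv ψ t := by
    funext t
    exact ((hasDerivAt_vd x i t).mul (hdline t)).deriv
  have h2 : HasDerivAt (fun t => vd1 x i t * ψ t + vd (Function.update x i t) * deriv ψ t)
      ((∑ p ∈ P n, (∑ q ∈ (P n).erase p, (∏ r ∈ ((P n).erase p).erase q,
          (Function.update x i (x i) r.1 - Function.update x i (x i) r.2)) * dw i q) * dw i p)
          * ψ (x i) + vd1 x i (x i) * deriv ψ (x i)
        + (vd1 x i (x i) * deriv ψ (x i)
            + vd (Function.update x i (x i)) * deriv (deriv ψ) (x i))) (x i) := by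
    exact ((hasDerivAt_vd1 x i (x i)).mul (hdline (x i))).add
      ((hasDerivAt_vd x i (x i)).mul ((diff_deriv_line x i f hf (x i)).hasDerivAt))
  have hred : pd i (pd i (fun z => vd z * f z)) x
      = deriv (deriv (fun t => vd (Function.update x i t) * f (Function.update x i t))) (x i) :=
    pd_pd_eq x i _
  rw [hred, hd1, h2.deriv]
  have hvd2 := pd_pd_vd_eval x i
  rw [pd_pd_eq x i f, pd_vd_eval, pd_apply x i f]
  simp only [Function.update_eq_self] at *
  rw [hvd2]
  have hpsix : ψ (x i) = f x := by
    show f (Function.update x i (x i)) = f x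
    rw [Function.update_eq_self]
  rw [hpsix]
  have e1 : deriv (fun t => f (Function.update x i t)) (x i) = deriv ψ (x i) := rfl
  have e2 : deriv (deriv fun t => f (Function.update x i t)) (x i) = deriv (deriv ψ) (x i) := rfl
  rw [e1, e2]
  ring

end Main

section Pairs

def Pd (n : ℕ) : Finset (Fin n × Fin n) := Finset.univ.filter fun p => p.1 ≠ p.2

lemma sum_offdiag_pairs (h : Fin n → Fin n → ℝ) :
    ∑ p ∈ Pd n, h p.1 p.2 = ∑ i : Fin n, ∑ j ∈ Finset.univ.erase i, h i j := by
  rw [Pd, Finset.sum_filter, ← Finset.univ_product_univ, Finset.sum_product]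
  refine Finset.sum_congr rfl fun a _ => ?_
  rw [← Finset.filter_ne', Finset.sum_filter]
  refine Finset.sum_congr rfl fun b _ => ?_
  rcases eq_or_ne a b with h' | h'
  · simp [h']
  · simp [h', h'.symm]

lemma sum_pairs_swap (h : Fin n → Fin n → ℝ) :
    ∑ i : Fin n, ∑ j ∈ Finset.univ.erase i, h i j
      = ∑ i : Fin n, ∑ j ∈ Finset.univ.erase i, h j i := by
  rw [← sum_offdiag_pairs, ← sum_offdiag_pairs (fun i j => h j i)]
  refine Finset.sum_nbij' Prod.swap Prod.swap ?_ ?_ ?_ ?_ ?_ <;>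
    simp [Pd, ne_comm]

lemma count_pairs :
    ∑ i : Fin n, ∑ j ∈ Finset.univ.erase i, (1 : ℝ) = n * (n - 1) := by
  rcases Nat.eq_zero_or_pos n with h | h
  · subst h; simp
  have hcard : ∀ i : Fin n, (Finset.univ.erase i).card = n - 1 := by
    intro i
    rw [Finset.card_erase_of_mem (Finset.mem_univ i), Finset.card_univ, Fintype.card_fin]
  have : ∀ i : Fin n, ∑ j ∈ Finset.univ.erase i, (1 : ℝ) = ((n : ℝ) - 1) := by
    intro i
    rw [Finset.sum_const, hcard i, nsmul_eq_mul, mul_one, Nat.cast_sub h, Nat.cast_one]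
  simp only [this, Finset.sum_const, Finset.card_univ, Fintype.card_fin, nsmul_eq_mul]

lemma A0 (x : Fin n → ℝ) :
    ∑ i : Fin n, ∑ j ∈ Finset.univ.erase i, (x i - x j)⁻¹ = 0 := by
  have h := sum_pairs_swap (fun i j => (x i - x j)⁻¹)
  have h2 : ∑ i : Fin n, ∑ j ∈ Finset.univ.erase i, (x j - x i)⁻¹
      = - ∑ i : Fin n, ∑ j ∈ Finset.univ.erase i, (x i - x j)⁻¹ := by
    rw [← Finset.sum_neg_distrib]
    refine Finset.sum_congr rfl fun i _ => ?_
    rw [← Finset.sum_neg_distrib]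
    refine Finset.sum_congr rfl fun j _ => ?_
    rw [← neg_sub, inv_neg]
  rw [h2] at h
  linarith

lemma A1 (x : Fin n → ℝ) (hx : ∀ i j : Fin n, i ≠ j → x i ≠ x j) :
    ∑ i : Fin n, ∑ j ∈ Finset.univ.erase i, x i * (x i - x j)⁻¹ = n * (n - 1) / 2 := by
  have h := sum_pairs_swap (fun i j => x i * (x i - x j)⁻¹)
  have key : ∑ i : Fin n, ∑ j ∈ Finset.univ.erase i,
      (x i * (x i - x j)⁻¹ + x j * (x j - x i)⁻¹) = n * (n - 1) := by
    rw [← count_pairs (n := n)]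
    refine Finset.sum_congr rfl fun i _ => Finset.sum_congr rfl fun j hj => ?_
    have hij : x i ≠ x j := hx i j (Finset.ne_of_mem_erase hj).symm
    have h1 : x i - x j ≠ 0 := sub_ne_zero.2 hij
    have h2 : x j - x i ≠ 0 := sub_ne_zero.2 hij.symm
    field_simp
    ring
  simp only [Finset.sum_add_distrib] at key
  rw [← h] at key
  linarith

end Pairs

section Triples

def Td (n : ℕ) : Finset (Fin n × Fin n × Fin n) :=
  Finset.univ.filter fun t => t.1 ≠ t.2.1 ∧ t.1 ≠ t.2.2 ∧ t.2.1 ≠ t.2.2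

lemma erase_erase_eq (a b : Fin n) :
    (Finset.univ.erase a).erase b = Finset.univ.filter (fun k => k ≠ a ∧ k ≠ b) := by
  ext k
  simp only [Finset.mem_erase, Finset.mem_univ, and_true, Finset.mem_filter, true_and]
  tauto

lemma sum_triples (h : Fin n → Fin n → Fin n → ℝ) :
    ∑ t ∈ Td n, h t.1 t.2.1 t.2.2
      = ∑ i : Fin n, ∑ j ∈ Finset.univ.erase i, ∑ k ∈ (Finset.univ.erase i).erase j,
          h i j k := by
  rw [Td, Finset.sum_filter, ← Finset.univ_product_univ, Finset.sum_product]
  refine Finset.sum_congr rfl fun a _ => ?_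
  rw [← Finset.univ_product_univ, Finset.sum_product]
  rw [← Finset.filter_ne', Finset.sum_filter]
  refine Finset.sum_congr rfl fun b _ => ?_
  rcases eq_or_ne a b with hab | hab
  · subst hab
    simp
  · rw [if_pos (Ne.symm hab), ← Finset.filter_ne', Finset.filter_filter, Finset.sum_filter]
    refine Finset.sum_congr rfl fun k _ => ?_
    rcases eq_or_ne k a with h1 | h1 <;> rcases eq_or_ne k b with h2 | h2 <;>
      simp_all [ne_comm]


end Triples

lemma sum_triples_rot (h : Fin n → Fin n → Fin n → ℝ) :
    ∑ t ∈ Td n, h t.1 t.2.1 t.2.2 = ∑ t ∈ Td n, h t.2.1 t.2.2 t.1 := by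
  refine Finset.sum_nbij' (fun t => (t.2.2, t.1, t.2.1)) (fun t => (t.2.1, t.2.2, t.1))
    ?_ ?_ ?_ ?_ ?_
  · intro t ht
    simp only [Td, Finset.mem_filter, Finset.mem_univ, true_and] at ht ⊢
    exact ⟨(ht.2.1).symm, (ht.2.2).symm, ht.1⟩
  · intro t ht
    simp only [Td, Finset.mem_filter, Finset.mem_univ, true_and] at ht ⊢
    exact ⟨ht.2.2, ht.1.symm, ht.2.1.symm⟩
  · intro t _; rfl
  · intro t _; rfl
  · intro t _; rfl

lemma count_triples :
    ∑ i : Fin n, ∑ j ∈ Finset.univ.erase i, ∑ k ∈ (Finset.univ.erase i).erase j, (1 : ℝ)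
      = n * (n - 1) * (n - 2) := by
  rcases Nat.lt_or_ge n 2 with h | h
  · interval_cases n
    · simp
    · have he : ∀ i : Fin 1, (Finset.univ.erase i) = (∅ : Finset (Fin 1)) := fun i => by
        ext a; simp [Subsingleton.elim a i]
      simp [he]
  have hc2 : ∀ (i j : Fin n), j ∈ Finset.univ.erase i →
      ∑ k ∈ (Finset.univ.erase i).erase j, (1 : ℝ) = (n : ℝ) - 2 := by
    intro i j hj
    rw [Finset.sum_const, Finset.card_erase_of_mem hj,
      Finset.card_erase_of_mem (Finset.mem_univ i), Finset.card_univ, Fintype.card_fin,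
      nsmul_eq_mul, mul_one]
    have h1 : n - 1 - 1 = n - 2 := by omega
    rw [h1, Nat.cast_sub h]
    norm_num
  have hc1 : ∀ i : Fin n, ∑ j ∈ Finset.univ.erase i, ((n : ℝ) - 2)
      = ((n : ℝ) - 1) * ((n : ℝ) - 2) := by
    intro i
    rw [Finset.sum_const, Finset.card_erase_of_mem (Finset.mem_univ i), Finset.card_univ,
      Fintype.card_fin, nsmul_eq_mul, Nat.cast_sub (by omega : 1 ≤ n), Nat.cast_one]
  calc ∑ i : Fin n, ∑ j ∈ Finset.univ.erase i, ∑ k ∈ (Finset.univ.erase i).erase j, (1 : ℝ)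
      = ∑ i : Fin n, ∑ j ∈ Finset.univ.erase i, ((n : ℝ) - 2) := by
        exact Finset.sum_congr rfl fun i _ => Finset.sum_congr rfl fun j hj => hc2 i j hj
    _ = ∑ i : Fin n, ((n : ℝ) - 1) * ((n : ℝ) - 2) := Finset.sum_congr rfl fun i _ => hc1 i
    _ = n * ((n - 1) * (n - 2)) := by
        rw [Finset.sum_const, Finset.card_univ, Fintype.card_fin, nsmul_eq_mul]
    _ = n * (n - 1) * (n - 2) := by ring

section BIdent

variable (x : Fin n → ℝ) (hx : ∀ i j : Fin n, i ≠ j → x i ≠ x j)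
include hx

lemma triple_rot_sum (g : Fin n → Fin n → Fin n → ℝ)
    (hg : ∀ a b c : Fin n, a ≠ b → a ≠ c → b ≠ c → g a b c + g b c a + g c a b = 0) :
    ∑ i : Fin n, ∑ j ∈ Finset.univ.erase i, ∑ k ∈ (Finset.univ.erase i).erase j, g i j k
      = 0 := by
  rw [← sum_triples]
  have h1 := sum_triples_rot (n := n) g
  have h2 := sum_triples_rot (n := n) (fun a b c => g b c a)
  have h3 : ∑ t ∈ Td n, (g t.1 t.2.1 t.2.2 + g t.2.1 t.2.2 t.1 + g t.2.2 t.1 t.2.1) = 0 := by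
    refine Finset.sum_eq_zero fun t ht => ?_
    simp only [Td, Finset.mem_filter, Finset.mem_univ, true_and] at ht
    exact hg t.1 t.2.1 t.2.2 ht.1 ht.2.1 ht.2.2
  simp only [Finset.sum_add_distrib] at h3
  beta_reduce at h2
  linarith [h1, h2, h3]

lemma B1 :
    ∑ i : Fin n, ∑ j ∈ Finset.univ.erase i, ∑ k ∈ (Finset.univ.erase i).erase j,
      x i * ((x i - x j)⁻¹ * (x i - x k)⁻¹) = 0 := by
  refine triple_rot_sum x hx _ fun a b c hab hac hbc => ?_
  have h1 : x a - x b ≠ 0 := sub_ne_zero.2 (hx a b hab)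
  have h2 : x a - x c ≠ 0 := sub_ne_zero.2 (hx a c hac)
  have h3 : x b - x c ≠ 0 := sub_ne_zero.2 (hx b c hbc)
  have h4 : x b - x a ≠ 0 := sub_ne_zero.2 (hx b a hab.symm)
  have h5 : x c - x a ≠ 0 := sub_ne_zero.2 (hx c a hac.symm)
  have h6 : x c - x b ≠ 0 := sub_ne_zero.2 (hx c b hbc.symm)
  field_simp
  ring

lemma B2 :
    ∑ i : Fin n, ∑ j ∈ Finset.univ.erase i, ∑ k ∈ (Finset.univ.erase i).erase j,
      (x i) ^ 2 * ((x i - x j)⁻¹ * (x i - x k)⁻¹) = n * (n - 1) * (n - 2) / 3 := by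
  have key : ∑ i : Fin n, ∑ j ∈ Finset.univ.erase i, ∑ k ∈ (Finset.univ.erase i).erase j,
      ((x i) ^ 2 * ((x i - x j)⁻¹ * (x i - x k)⁻¹) - (1:ℝ)/3) = 0 := by
    refine triple_rot_sum x hx _ fun a b c hab hac hbc => ?_
    have h1 : x a - x b ≠ 0 := sub_ne_zero.2 (hx a b hab)
    have h2 : x a - x c ≠ 0 := sub_ne_zero.2 (hx a c hac)
    have h3 : x b - x c ≠ 0 := sub_ne_zero.2 (hx b c hbc)
    have h4 : x b - x a ≠ 0 := sub_ne_zero.2 (hx b a hab.symm)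
    have h5 : x c - x a ≠ 0 := sub_ne_zero.2 (hx c a hac.symm)
    have h6 : x c - x b ≠ 0 := sub_ne_zero.2 (hx c b hbc.symm)
    field_simp
    ring
  simp only [Finset.sum_sub_distrib] at key
  have hcnt := count_triples (n := n)
  have hcnt3 : ∑ i : Fin n, ∑ j ∈ Finset.univ.erase i, ∑ k ∈ (Finset.univ.erase i).erase j,
      ((1:ℝ)/3) = n * (n - 1) * (n - 2) / 3 := by
    simp only [← Finset.sum_div]
    rw [hcnt]
  linarith [key, hcnt3]

end BIdent

section Master

variable (x : Fin n → ℝ) (hx : ∀ i j : Fin n, i ≠ j → x i ≠ x j)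
include hx

lemma sI_sq_sub_tI (i : Fin n) :
    (sI x i) ^ 2 - tI x i
      = ∑ j ∈ Finset.univ.erase i, ∑ k ∈ (Finset.univ.erase i).erase j,
          (x i - x j)⁻¹ * (x i - x k)⁻¹ := by
  rw [sI, tI, ← offdiag_sum]

lemma Bsum (m : ℕ) :
    ∑ i : Fin n, (x i) ^ m * ((sI x i) ^ 2 - tI x i)
      = ∑ i : Fin n, ∑ j ∈ Finset.univ.erase i, ∑ k ∈ (Finset.univ.erase i).erase j,
          (x i) ^ m * ((x i - x j)⁻¹ * (x i - x k)⁻¹) := by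
  refine Finset.sum_congr rfl fun i _ => ?_
  rw [sI_sq_sub_tI x hx i, Finset.mul_sum]
  refine Finset.sum_congr rfl fun j _ => ?_
  rw [Finset.mul_sum]

lemma K3 (a b : ℝ) :
    ∑ i : Fin n, (2 * x i * (1 - x i) * ((sI x i) ^ 2 - tI x i)
        + 2 * (a - b * x i) * sI x i)
      = -(2 / 3 * (n * (n - 1) * (n - 2)) + b * (n * (n - 1))) := by
  have hB1 : ∑ i : Fin n, x i * ((sI x i) ^ 2 - tI x i) = 0 := by
    have := Bsum x hx 1
    simp only [pow_one] at this
    rw [this, B1 x hx]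
  have hB2 : ∑ i : Fin n, (x i) ^ 2 * ((sI x i) ^ 2 - tI x i) = n * (n - 1) * (n - 2) / 3 := by
    rw [Bsum x hx 2, B2 x hx]
  have hA0 : ∑ i : Fin n, sI x i = 0 := A0 x
  have hA1 : ∑ i : Fin n, x i * sI x i = n * (n - 1) / 2 := by
    have h := A1 x hx
    have : ∀ i : Fin n, x i * sI x i = ∑ j ∈ Finset.univ.erase i, x i * (x i - x j)⁻¹ := by
      intro i; rw [sI, Finset.mul_sum]
    simp only [this]
    exact h
  have expand : ∀ i : Fin n, 2 * x i * (1 - x i) * ((sI x i) ^ 2 - tI x i)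
      + 2 * (a - b * x i) * sI x i
      = 2 * (x i * ((sI x i) ^ 2 - tI x i)) - 2 * ((x i) ^ 2 * ((sI x i) ^ 2 - tI x i))
        + 2 * a * sI x i - 2 * b * (x i * sI x i) := fun i => by ring
  simp only [expand]
  simp only [Finset.sum_add_distrib, Finset.sum_sub_distrib, ← Finset.mul_sum]
  rw [hB1, hB2, hA0, hA1]
  ring

end Master

end JacobiAux

theorem jacobi_conjugation_identity (n : ℕ) (p q : ℤ) (hn : 1 ≤ n)
    (hp : (n : ℤ) ≤ p) (hq : (n : ℤ) ≤ q)
    (f : (Fin n → ℝ) → ℝ) (hf : ContDiff ℝ (⊤ : ℕ∞) f)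
    (x : Fin n → ℝ) (hx0 : ∀ i, x i ∈ Set.Ioo (0:ℝ) 1)
    (hx : ∀ i j, i ≠ j → x i ≠ x j) :
    ∑ i : Fin n, (2 * x i * (1 - x i) * pd i (pd i (fun z => vd z * f z)) x
        + 2 * (((p:ℝ) - n + 1) - ((p:ℝ) + q - 2 * n + 2) * x i)
            * pd i (fun z => vd z * f z) x)
      = vd x * ((∑ i : Fin n, (2 * x i * (1 - x i) * pd i (pd i f) x
            + 2 * (((p:ℝ) - n + 1) - ((p:ℝ) + q - 2 * n + 2) * x i) * pd i f x))
          + (∑ i : Fin n, ∑ j ∈ Finset.univ.erase i,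
              (4 * x i * (1 - x i) / (x i - x j)) * pd i f x)
          - ((n:ℝ) * ((n:ℝ) - 1) * (3 * (p:ℝ) + 3 * (q:ℝ) - 4 * (n:ℝ) + 2) / 3) * f x) := by
  classical
  open JacobiAux in
  have hΛ : (n:ℝ) * ((n:ℝ) - 1) * (3 * (p:ℝ) + 3 * (q:ℝ) - 4 * (n:ℝ) + 2) / 3
      = -(∑ i : Fin n, (2 * x i * (1 - x i) * ((sI x i) ^ 2 - tI x i)
          + 2 * ((((p:ℝ) - n + 1)) - (((p:ℝ) + q - 2 * n + 2)) * x i) * sI x i)) := by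
    rw [K3 x hx ((p:ℝ) - n + 1) ((p:ℝ) + q - 2 * n + 2)]
    ring
  have hC : ∀ i : Fin n, ∑ j ∈ Finset.univ.erase i,
      (4 * x i * (1 - x i) / (x i - x j)) * pd i f x
        = 4 * x i * (1 - x i) * pd i f x * sI x i := by
    intro i
    rw [sI, Finset.mul_sum]
    refine Finset.sum_congr rfl fun j _ => ?_
    rw [div_eq_mul_inv]
    ring
  rw [hΛ]
  simp only [neg_mul, sub_neg_eq_add, Finset.sum_mul]
  rw [← Finset.sum_add_distrib, ← Finset.sum_add_distrib, Finset.mul_sum]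
  refine Finset.sum_congr rfl fun i _ => ?_
  rw [JacobiAux.pd_mul_formula x i f hf, JacobiAux.pd_pd_mul_formula x i f hf,
    JacobiAux.pd_vd_formula x i hx, JacobiAux.pd_pd_vd_formula x i hx, hC i]
  ring
end

section
/- Fix real numbers y_1 < y_2 < ⋯ < y_n. Then ∫ Δ(x) dx over the interlacing region {x ∈ ℝ^{n−1} : y_1 ≤ x_1 ≤ y_2 ≤ x_2 ≤ ⋯ ≤ x_{n−1} ≤ y_n} equals Δ(y)/(n−1)!, where Δ denotes the Vandermonde determinant in the respective number of variables. -/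
/-!
Write `Δ(x) = det (x_i ^ j)`. Since the region is the box `∏ᵢ [y_i, y_{i+1}]`, multilinearity of
the determinant together with Fubini turns the integral of `Δ` into the determinant of the
one-variable integrals `(y_{i+1}^{j+1} - y_i^{j+1}) / (j + 1)`. The column factors contribute
`1 / m!`, and the matrix of differences `y_{i+1}^{j+1} - y_i^{j+1}` is obtained from the
Vandermonde matrix of `y` by subtracting consecutive rows and deleting the first row and column,
so its determinant is `Δ(y)`.
-/

open MeasureTheory

theorem integral_det_of_apply {ι E 𝕜 : Type*} [Fintype ι] [DecidableEq ι] [RCLike 𝕜]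
    [MeasurableSpace E] {μ : ι → Measure E} [∀ i, SigmaFinite (μ i)] {f : ι → E → 𝕜}
    (hf : ∀ i j, Integrable (f j) (μ i)) :
    ∫ x, (Matrix.of fun i j => f j (x i)).det ∂Measure.pi μ
      = (Matrix.of fun i j => ∫ t, f j t ∂μ i).det := by
  simp_rw [← Matrix.det_transpose (Matrix.of _), Matrix.det_apply']
  rw [integral_finsetSum _ fun σ _ => (Integrable.fintype_prod fun i => hf i (σ i)).const_mul _]
  refine Finset.sum_congr rfl fun σ _ => ?_
  rw [integral_const_mul]
  exact congrArg _ (integral_fintype_prod_eq_prod fun i t => f (σ i) t)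

theorem integral_Icc_pow {a b : ℝ} (hab : a ≤ b) (n : ℕ) :
    ∫ t in Set.Icc a b, t ^ n = (b ^ (n + 1) - a ^ (n + 1)) / (n + 1) := by
  rw [integral_Icc_eq_integral_Ioc, ← intervalIntegral.integral_of_le hab, integral_pow]

theorem prod_fin_natCast_add_one_eq_factorial {R : Type*} [CommSemiring R] (m : ℕ) :
    ∏ j : Fin m, ((j : R) + 1) = m.factorial := by
  rw [Fin.prod_univ_eq_prod_range (fun j => (j : R) + 1),
    ← Finset.prod_range_add_one_eq_factorial]
  push_cast
  rfl

theorem det_succ_pow_sub_castSucc_pow {R : Type*} [CommRing R] {m : ℕ} (y : Fin (m + 1) → R) :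
    (Matrix.of fun i j : Fin m => y i.succ ^ ((j : ℕ) + 1) - y i.castSucc ^ ((j : ℕ) + 1)).det
      = (Matrix.vandermonde y).det := by
  -- `D` keeps the first row of the Vandermonde matrix and replaces every other row by its
  -- difference with the row above; its first column is `(1, 0, …, 0)`.
  set D : Matrix (Fin (m + 1)) (Fin (m + 1)) R :=
    Matrix.of fun i j => Fin.cases (y 0 ^ (j : ℕ))
      (fun i' => y i'.succ ^ (j : ℕ) - y i'.castSucc ^ (j : ℕ)) i with hD
  have hrows : (Matrix.vandermonde y).det = D.det := by
    apply Matrix.det_eq_of_forall_row_eq_smul_add_pred (fun _ => (1 : R))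
    · intro j; simp [hD, Matrix.vandermonde]
    · intro i j; simp [hD, Matrix.vandermonde]
  have hexpand : D.det = (D.submatrix Fin.succ Fin.succ).det := by
    rw [Matrix.det_succ_column_zero, Fin.sum_univ_succ]
    simp [hD]
  rw [hrows, hexpand]
  rfl

theorem det_succ_pow_sub_castSucc_pow_div {K : Type*} [Field K] {m : ℕ} (y : Fin (m + 1) → K) :
    (Matrix.of fun i j : Fin m =>
        (y i.succ ^ ((j : ℕ) + 1) - y i.castSucc ^ ((j : ℕ) + 1)) / ((j : ℕ) + 1)).det
      = (Matrix.vandermonde y).det / m.factorial := by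
  calc _ = (∏ j : Fin m, ((j : K) + 1)⁻¹) * (Matrix.of fun i j : Fin m =>
          y i.succ ^ ((j : ℕ) + 1) - y i.castSucc ^ ((j : ℕ) + 1)).det := by
        simp only [div_eq_inv_mul]
        exact Matrix.det_mul_row _ _
    _ = _ := by
      rw [det_succ_pow_sub_castSucc_pow, Finset.prod_inv_distrib,
        prod_fin_natCast_add_one_eq_factorial, inv_mul_eq_div]

theorem dixon_anderson_volume (m : ℕ) (y : Fin (m + 1) → ℝ) (hy : StrictMono y) :
    (∫ x in {x : Fin m → ℝ | ∀ i : Fin m, y i.castSucc ≤ x i ∧ x i ≤ y i.succ},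
        ∏ i : Fin m, ∏ j ∈ Finset.Ioi i, (x j - x i))
      = (∏ i : Fin (m + 1), ∏ j ∈ Finset.Ioi i, (y j - y i)) / (Nat.factorial m) := by
  have hbox : {x : Fin m → ℝ | ∀ i, y i.castSucc ≤ x i ∧ x i ≤ y i.succ}
      = Set.univ.pi fun i => Set.Icc (y i.castSucc) (y i.succ) := by
    ext
    simp only [Set.mem_ofPred_eq, Set.mem_univ_pi, Set.mem_Icc]
  have hle : ∀ i : Fin m, y i.castSucc ≤ y i.succ := fun _ => (hy Fin.castSucc_lt_succ).le
  have hintegrable : ∀ i j : Fin m, Integrable (fun t : ℝ => t ^ (j : ℕ))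
      (volume.restrict (Set.Icc (y i.castSucc) (y i.succ))) :=
    fun _ _ => (continuous_pow _).integrableOn_Icc
  simp_rw [hbox, volume_pi, Measure.restrict_pi_pi, ← Matrix.det_vandermonde]
  refine (integral_det_of_apply hintegrable).trans ?_
  simp only [integral_Icc_pow, hle]
  exact det_succ_pow_sub_castSucc_pow_div y
end

section
/- Fix real numbers λ_1 < λ_2 < ⋯ < λ_n. The Lebesgue volume of the Gelfand–Tsetlin polytope with top row λ, namely the set of triangular arrays (x^k_i)_{1 ≤ i ≤ k ≤ n} with x^n = λ and x^{k−1}_{i−1} ≤ x^k_i ≤ x^{k−1}_i for all applicable indices (viewed as a subset of ℝ^{n(n−1)/2} via the entries below the top row), equals Δ(λ) / (1!·2!·⋯·(n−1)!). -/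
open MeasureTheory

/-- The entry in row `r` (0-indexed; row `r` has `r+1` entries), position `i`, of the
triangular array whose top row (row `n-1`) is `lam` and whose lower rows are given by `x`. -/
noncomputable def entry (n : ℕ) (lam : Fin n → ℝ)
    (x : ((k : Fin (n - 1)) × Fin (k.val + 1)) → ℝ) (r i : ℕ) : ℝ :=
  if h : r < n - 1 then
    (if h2 : i < r + 1 then x ⟨⟨r, h⟩, ⟨i, h2⟩⟩ else 0)
  else if h3 : i < n then lam ⟨i, h3⟩ else 0

/-!
Removing the top free row `μ` of an array in the polytope with top row `λ` leaves an array in the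
polytope with top row `μ`, and `μ` ranges exactly over the box `∏ⱼ [λⱼ, λⱼ₊₁]`. By Fubini,
`vol GT(λ) = ∫_box vol GT(μ) dμ`, and by induction the integrand is `Δ(μ) / sf (n - 2)`.
Writing `Δ(μ) = det (μⱼ ^ i)`, each column depends on one coordinate only, so the integral over
the box is `det ((λⱼ₊₁ ^ (i+1) - λⱼ ^ (i+1)) / (i+1))`; subtracting consecutive rows of the
Vandermonde matrix of `λ` identifies this with `Δ(λ) / (n - 1)!`.
-/

open Set Matrix

theorem Matrix.det_vandermonde_eq_det_pow_succ_sub {R : Type*} [CommRing R] {N : ℕ}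
    (v : Fin (N + 1) → R) :
    (vandermonde v).det =
      (of fun i j : Fin N => v i.succ ^ (j.val + 1) - v i.castSucc ^ (j.val + 1)).det := by
  set B : Matrix (Fin (N + 1)) (Fin (N + 1)) R :=
    of (Fin.cases (vandermonde v 0) fun i => vandermonde v i.succ - vandermonde v i.castSucc)
  have hB : (vandermonde v).det = B.det :=
    det_eq_of_forall_row_eq_smul_add_pred (fun _ => 1) (fun j => rfl) fun i j => by simp [B]
  rw [hB, det_succ_column_zero, Fin.sum_univ_succ]
  simp only [Fin.coe_ofNat_eq_mod, Nat.zero_mod, pow_zero, of_apply, Fin.cases_zero,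
    vandermonde_apply, mul_one, Fin.succAbove_zero, one_mul, Fin.val_succ, Fin.cases_succ,
    Pi.sub_apply, sub_self, mul_zero, zero_mul, Finset.sum_const_zero, add_zero, B]
  rfl

theorem MeasureTheory.integral_pi_det_eq_det_integral {𝕜 ι : Type*} [RCLike 𝕜] [Fintype ι]
    [DecidableEq ι] {E : ι → Type*} {mE : ∀ i, MeasurableSpace (E i)} {μ : (i : ι) → Measure (E i)}
    [∀ i, SigmaFinite (μ i)] (f : ι → (j : ι) → E j → 𝕜)
    (hf : ∀ i j, Integrable (f i j) (μ j)) :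
    ∫ x, (of fun i j => f i j (x j)).det ∂(Measure.pi μ) =
      (of fun i j => ∫ t, f i j t ∂(μ j)).det := by
  simp only [det_apply, of_apply, Units.smul_def, zsmul_eq_mul]
  rw [integral_finsetSum _ fun σ _ => (Integrable.fintype_prod_dep fun j => hf _ j).const_mul _]
  refine Finset.sum_congr rfl fun σ _ => ?_
  rw [integral_const_mul, integral_fintype_prod_eq_prod (fun j t => f (σ j) j t)]

def interlacingBox {N : ℕ} (v : Fin (N + 1) → ℝ) : Set (Fin N → ℝ) :=
  univ.pi fun j => Icc (v j.castSucc) (v j.succ)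

theorem measurableSet_interlacingBox {N : ℕ} (v : Fin (N + 1) → ℝ) :
    MeasurableSet (interlacingBox v) :=
  .univ_pi fun _ => measurableSet_Icc

theorem isCompact_interlacingBox {N : ℕ} (v : Fin (N + 1) → ℝ) :
    IsCompact (interlacingBox v) :=
  isCompact_univ_pi fun _ => isCompact_Icc

theorem monotone_of_mem_interlacingBox {N : ℕ} {v : Fin (N + 1) → ℝ} (hv : Monotone v)
    {x : Fin N → ℝ} (hx : x ∈ interlacingBox v) : Monotone x := by
  refine monotone_iff_forall_lt.2 fun a b hab => ?_
  calc x a ≤ v a.succ := (hx a trivial).2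
    _ ≤ v b.castSucc := hv (Fin.succ_le_castSucc_iff.2 hab)
    _ ≤ x b := (hx b trivial).1

theorem det_vandermonde_nonneg {N : ℕ} {v : Fin N → ℝ} (hv : Monotone v) :
    0 ≤ (vandermonde v).det := by
  rw [det_vandermonde]
  exact Finset.prod_nonneg fun i _ => Finset.prod_nonneg fun j hj =>
    sub_nonneg.2 (hv (Finset.mem_Ioi.1 hj).le)

theorem setIntegral_det_vandermonde_interlacingBox {N : ℕ} {v : Fin (N + 1) → ℝ}
    (hv : Monotone v) :
    ∫ x in interlacingBox v, (vandermonde x).det = (vandermonde v).det / N.factorial := by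
  have hpow (i j : Fin N) :
      ∫ t in Icc (v j.castSucc) (v j.succ), t ^ i.val =
        (v j.succ ^ (i.val + 1) - v j.castSucc ^ (i.val + 1)) / (i.val + 1) := by
    rw [integral_Icc_eq_integral_Ioc,
      ← intervalIntegral.integral_of_le (hv (Fin.castSucc_le_succ j)), integral_pow]
  have hfact : ∏ i : Fin N, ((i.val : ℝ) + 1) = N.factorial := by
    rw [Fin.prod_univ_eq_prod_range (fun i => (i : ℝ) + 1),
      ← Finset.prod_range_add_one_eq_factorial]
    push_cast
    rfl
  have hV (x : Fin N → ℝ) : (vandermonde x).det = (of fun i j => x j ^ i.val).det :=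
    (det_transpose _).symm
  simp only [interlacingBox, volume_pi, Measure.restrict_pi_pi, hV]
  rw [integral_pi_det_eq_det_integral (fun (i j : Fin N) (t : ℝ) => t ^ i.val)
    fun i j => (continuous_pow _).integrableOn_Icc]
  simp only [hpow, div_eq_inv_mul]
  refine (det_mul_column (fun i : Fin N => ((i.val : ℝ) + 1)⁻¹)
    (of fun i j => v j.succ ^ (i.val + 1) - v j.castSucc ^ (i.val + 1))).trans ?_
  rw [Finset.prod_inv_distrib, hfact, det_vandermonde_eq_det_pow_succ_sub, ← det_transpose]
  rfl

section entry

variable {n : ℕ} (lam : Fin n → ℝ) (x : ((k : Fin (n - 1)) × Fin (k.val + 1)) → ℝ) {r i : ℕ}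

theorem entry_of_lt (hr : r < n - 1) (hi : i < r + 1) :
    entry n lam x r i = x ⟨⟨r, hr⟩, ⟨i, hi⟩⟩ := by
  rw [entry, dif_pos hr, dif_pos hi]

theorem entry_of_not_lt (hr : ¬r < n - 1) (hi : i < n) : entry n lam x r i = lam ⟨i, hi⟩ := by
  rw [entry, dif_neg hr, dif_pos hi]

theorem continuous_entry (r i : ℕ) : Continuous fun x => entry n lam x r i := by
  unfold entry
  split_ifs <;> fun_prop

end entry

abbrev TriIndex (m : ℕ) : Type := (k : Fin m) × Fin (k.val + 1)

def gelfandTsetlin (m : ℕ) (lam : Fin (m + 1) → ℝ) : Set (TriIndex m → ℝ) :=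
  {x | ∀ r i : ℕ, r + 1 < m + 1 → i ≤ r →
    entry (m + 1) lam x (r + 1) i ≤ entry (m + 1) lam x r i ∧
    entry (m + 1) lam x r i ≤ entry (m + 1) lam x (r + 1) (i + 1)}

theorem isClosed_gelfandTsetlin (m : ℕ) (lam : Fin (m + 1) → ℝ) :
    IsClosed (gelfandTsetlin m lam) := by
  have hc (r i : ℕ) : Continuous fun x : TriIndex m → ℝ => entry (m + 1) lam x r i :=
    continuous_entry lam r i
  simp only [gelfandTsetlin, Set.ofPred_forall, Set.ofPred_and]
  exact isClosed_iInter fun r => isClosed_iInter fun i => isClosed_iInter fun _ =>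
    isClosed_iInter fun _ => (isClosed_le (hc _ _) (hc _ _)).inter
      (isClosed_le (hc _ _) (hc _ _))

namespace TriIndex

def succEquiv (m : ℕ) : Fin (m + 1) ⊕ TriIndex m ≃ TriIndex (m + 1) where
  toFun
    | .inl j => ⟨Fin.last m, j⟩
    | .inr ⟨k, i⟩ => ⟨k.castSucc, i⟩
  invFun s :=
    if h : s.1.val < m then .inr ⟨⟨s.1.val, h⟩, s.2⟩
    else .inl ⟨s.2.val, by omega⟩
  left_inv := by
    rintro (j | ⟨k, i⟩)
    · simp
    · simp [k.isLt]
  right_inv := by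
    rintro ⟨k, i⟩
    by_cases h : k.val < m
    · simp [h]
    · obtain rfl : k = Fin.last m := Fin.ext (by rw [Fin.val_last]; omega)
      simp

variable {m : ℕ}

def topRow (x : TriIndex (m + 1) → ℝ) : Fin (m + 1) → ℝ := fun j => x ⟨Fin.last m, j⟩

def lowRows (x : TriIndex (m + 1) → ℝ) : TriIndex m → ℝ := fun s => x ⟨s.1.castSucc, s.2⟩

def splitTop (m : ℕ) : (TriIndex (m + 1) → ℝ) ≃ᵐ (Fin (m + 1) → ℝ) × (TriIndex m → ℝ) :=
  (MeasurableEquiv.piCongrLeft (fun _ => ℝ) (succEquiv m)).symm.trans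
    (MeasurableEquiv.sumPiEquivProdPi fun _ => ℝ)

theorem splitTop_apply (x : TriIndex (m + 1) → ℝ) : splitTop m x = (topRow x, lowRows x) := rfl

theorem measurePreserving_splitTop (m : ℕ) : MeasurePreserving (splitTop m) :=
  (volume_measurePreserving_sumPiEquivProdPi _).comp
    ((volume_measurePreserving_piCongrLeft _ (succEquiv m)).symm _)

theorem entry_topRow_lowRows (lam : Fin (m + 2) → ℝ) (x : TriIndex (m + 1) → ℝ) {r i : ℕ}
    (hr : r < m + 1) (hi : i < r + 1) :
    entry (m + 1) (topRow x) (lowRows x) r i = entry (m + 2) lam x r i := by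
  rw [entry_of_lt lam x (by omega) hi]
  rcases Nat.lt_or_ge r m with h | h
  · rw [entry_of_lt _ _ (by omega) hi]
    rfl
  · obtain rfl : r = m := by omega
    rw [entry_of_not_lt _ _ (by omega) (by omega)]
    rfl

theorem mem_gelfandTsetlin_succ_iff {lam : Fin (m + 2) → ℝ} {x : TriIndex (m + 1) → ℝ} :
    x ∈ gelfandTsetlin (m + 1) lam ↔
      topRow x ∈ interlacingBox lam ∧ lowRows x ∈ gelfandTsetlin m (topRow x) := by
  have top (i : Fin (m + 1)) :
      (entry (m + 2) lam x (m + 1) i ≤ entry (m + 2) lam x m i ∧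
        entry (m + 2) lam x m i ≤ entry (m + 2) lam x (m + 1) (i.val + 1)) ↔
      topRow x i ∈ Icc (lam i.castSucc) (lam i.succ) := by
    have := i.isLt
    rw [entry_of_not_lt (r := m + 1) (i := i) _ _ (by omega) (by omega),
      entry_of_not_lt (r := m + 1) (i := i + 1) _ _ (by omega) (by omega),
      entry_of_lt (r := m) (i := i) _ _ (by omega) (by omega)]
    rfl
  have low (r i : ℕ) (hr : r + 1 < m + 1) (hi : i ≤ r) :
      (entry (m + 2) lam x (r + 1) i ≤ entry (m + 2) lam x r i ∧
        entry (m + 2) lam x r i ≤ entry (m + 2) lam x (r + 1) (i + 1)) ↔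
      (entry (m + 1) (topRow x) (lowRows x) (r + 1) i ≤
          entry (m + 1) (topRow x) (lowRows x) r i ∧
        entry (m + 1) (topRow x) (lowRows x) r i ≤
          entry (m + 1) (topRow x) (lowRows x) (r + 1) (i + 1)) := by
    rw [entry_topRow_lowRows lam x hr (by omega),
      entry_topRow_lowRows lam x (by omega) (by omega), entry_topRow_lowRows lam x hr (by omega)]
  simp only [gelfandTsetlin, interlacingBox, mem_ofPred_eq, mem_univ_pi]
  constructor
  · intro h
    exact ⟨fun i => (top i).1 (h m i (by omega) (by omega)),
      fun r i hr hi => (low r i hr hi).1 (h r i (by omega) hi)⟩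
  · rintro ⟨hbox, hlow⟩ r i hr hi
    rcases Nat.lt_or_ge (r + 1) (m + 1) with hr | hr
    · exact (low r i hr hi).2 (hlow r i hr hi)
    · obtain rfl : r = m := by omega
      exact (top ⟨i, by omega⟩).2 (hbox _)

end TriIndex

open TriIndex in
theorem volume_gelfandTsetlin_succ {m : ℕ} (lam : Fin (m + 2) → ℝ) :
    volume (gelfandTsetlin (m + 1) lam) =
      ∫⁻ μ in interlacingBox lam, volume (gelfandTsetlin m μ) := by
  set A := (splitTop m).symm ⁻¹' gelfandTsetlin (m + 1) lam
  have hA_meas : MeasurableSet A :=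
    (splitTop m).symm.measurable (isClosed_gelfandTsetlin _ _).measurableSet
  have hA : A = {p | p.1 ∈ interlacingBox lam ∧ p.2 ∈ gelfandTsetlin m p.1} := by
    ext p
    obtain ⟨x, rfl⟩ := (splitTop m).surjective p
    rw [mem_preimage, MeasurableEquiv.symm_apply_apply, mem_gelfandTsetlin_succ_iff,
      splitTop_apply]
    rfl
  have hsection (μ : Fin (m + 1) → ℝ) : volume (Prod.mk μ ⁻¹' A) =
      (interlacingBox lam).indicator (fun ν => volume (gelfandTsetlin m ν)) μ := by
    by_cases hμ : μ ∈ interlacingBox lam <;> simp [hA, hμ]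
  calc volume (gelfandTsetlin (m + 1) lam) = volume A :=
        ((measurePreserving_splitTop m).symm.measure_preimage_equiv _).symm
    _ = ∫⁻ μ, volume (Prod.mk μ ⁻¹' A) := by
        rw [Measure.volume_eq_prod, Measure.prod_apply hA_meas]
    _ = ∫⁻ μ in interlacingBox lam, volume (gelfandTsetlin m μ) := by
        simp only [hsection, lintegral_indicator (measurableSet_interlacingBox lam)]

open Nat in
theorem volume_gelfandTsetlin (m : ℕ) {lam : Fin (m + 1) → ℝ} (hlam : Monotone lam) :
    volume (gelfandTsetlin m lam) = ENNReal.ofReal ((vandermonde lam).det / sf m) := by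
  induction m with
  | zero =>
    have : gelfandTsetlin 0 lam = univ := eq_univ_of_forall fun x r i hr => by omega
    simp [this, volume_pi]
  | succ m ih =>
    have hint :
        IntegrableOn (fun μ => (vandermonde μ).det / (sf m : ℝ)) (interlacingBox lam) := by
      refine ContinuousOn.integrableOn_compact (isCompact_interlacingBox lam) ?_
      simp only [det_vandermonde]
      fun_prop
    have hnonneg : 0 ≤ᵐ[volume.restrict (interlacingBox lam)]
        fun μ => (vandermonde μ).det / (sf m : ℝ) :=
      (ae_restrict_iff' (measurableSet_interlacingBox lam)).2 <| .of_forall fun μ hμ =>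
        div_nonneg (det_vandermonde_nonneg (monotone_of_mem_interlacingBox hlam hμ))
          (by positivity)
    rw [volume_gelfandTsetlin_succ, setLIntegral_congr_fun (measurableSet_interlacingBox lam)
      fun μ hμ => ih (monotone_of_mem_interlacingBox hlam hμ),
      ← ofReal_integral_eq_lintegral_ofReal hint hnonneg, integral_div,
      setIntegral_det_vandermonde_interlacingBox hlam, superFactorial_succ]
    push_cast
    rw [div_div]

theorem gelfand_tsetlin_polytope_volume_general (n : ℕ) (lam : Fin n → ℝ)
    (hlam : StrictMono lam) :
    MeasureTheory.volume
        {x : ((k : Fin (n - 1)) × Fin (k.val + 1)) → ℝ |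
          ∀ r i : ℕ, r + 1 < n → i ≤ r →
            entry n lam x (r + 1) i ≤ entry n lam x r i ∧
            entry n lam x r i ≤ entry n lam x (r + 1) (i + 1)}
      = ENNReal.ofReal ((∏ i : Fin n, ∏ j ∈ Finset.Ioi i, (lam j - lam i))
          / ∏ k ∈ Finset.range n, (Nat.factorial k : ℝ)) := by
  cases n with
  | zero => simp [volume_pi]
  | succ m =>
    rw [← det_vandermonde, ← Nat.cast_prod, Nat.prod_range_succ_factorial]
    exact volume_gelfandTsetlin m hlam.monotone

theorem gelfand_tsetlin_polytope_volume (n : ℕ) (hn : 1 ≤ n) (lam : Fin n → ℝ)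
    (hlam : StrictMono lam) :
    MeasureTheory.volume
        {x : ((k : Fin (n - 1)) × Fin (k.val + 1)) → ℝ |
          ∀ r i : ℕ, r + 1 < n → i ≤ r →
            entry n lam x (r + 1) i ≤ entry n lam x r i ∧
            entry n lam x r i ≤ entry n lam x (r + 1) (i + 1)}
      = ENNReal.ofReal ((∏ i : Fin n, ∏ j ∈ Finset.Ioi i, (lam j - lam i))
          / ∏ k ∈ Finset.range n, (Nat.factorial k : ℝ)) :=
  gelfand_tsetlin_polytope_volume_general n lam hlam
end

section
/- Let n > p ≥ 1 be integers and fix 0 < y_1 < ⋯ < y_p. Then ∫ over the region {0 ≤ x_1 ≤ y_1 ≤ x_2 ≤ y_2 ≤ ⋯ ≤ x_p ≤ y_p} of [Δ(x) ∏_{i=1}^p x_i^{n−1−p}] / [Δ(y) ∏_{i=1}^p y_i^{n−p}] dx equals (n−p−1)!/(n−1)!. -/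
open MeasureTheory

/-!
The interlacing region is the box `∏ⱼ [y_{j-1}, y_j]` (with `y_{-1} = 0`), and the integrand
`Δ(x) ∏ xⱼ^m` is the determinant `det (xⱼ^(i+m))`. Expanding the determinant and integrating
each product term by Fubini, the integral is `det (∫_{y_{j-1}}^{y_j} t^(i+m) dt)`. Its rows are
differences of consecutive rows of `(y_j^(i+m+1) / (i+m+1))`, so the row operations undoing the
differences leave `det (y_j^(i+m+1)) / ∏ᵢ (i+m+1) = Δ(y) ∏ yⱼ^(m+1) · m! / (m+p)!`.
-/

theorem Matrix.det_of_pow_add {R : Type*} [CommRing R] {n : ℕ} (v : Fin n → R) (k : ℕ) :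
    (Matrix.of fun i j : Fin n => v i ^ ((j : ℕ) + k)).det
      = (∏ i, v i ^ k) * ∏ i, ∏ j ∈ Finset.Ioi i, (v j - v i) := by
  rw [← Matrix.det_vandermonde, ← Matrix.det_mul_column]
  congr 1
  ext i j
  simp [Matrix.vandermonde_apply, pow_add, mul_comm]

theorem Matrix.det_of_sub_pred_row {R : Type*} [CommRing R] {q : ℕ}
    (D : Matrix (Fin (q + 1)) (Fin (q + 1)) R) :
    (Matrix.of fun j i => D j i - Matrix.vecCons 0 (fun j' => D j'.castSucc) j i).det
      = D.det := by
  symm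
  refine Matrix.det_eq_of_forall_row_eq_smul_add_pred (fun _ => 1) (fun i => ?_) fun j i => ?_
  · simp
  · simp

theorem integral_det_of_apply_pi {ι α 𝕜 : Type*} [Fintype ι] [DecidableEq ι] [RCLike 𝕜]
    [MeasurableSpace α] {μ : ι → Measure α} [∀ j, SigmaFinite (μ j)] (f : ι → α → 𝕜)
    (hf : ∀ i j, Integrable (f i) (μ j)) :
    ∫ x, (Matrix.of fun j i => f i (x j)).det ∂(Measure.pi μ)
      = (Matrix.of fun j i => ∫ t, f i t ∂(μ j)).det := by
  simp_rw [← Matrix.det_transpose (Matrix.of _), Matrix.det_apply', Matrix.transpose_apply,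
    Matrix.of_apply]
  rw [integral_finsetSum _ fun σ _ => (Integrable.fintype_prod fun j => hf (σ j) j).const_mul _]
  refine Finset.sum_congr rfl fun σ _ => ?_
  rw [integral_const_mul, integral_fintype_prod_eq_prod]

theorem interlacing_eq_pi {q : ℕ} (y : Fin (q + 1) → ℝ) :
    {x : Fin (q + 1) → ℝ | 0 ≤ x 0 ∧ (∀ i, x i ≤ y i) ∧
        ∀ (i : Fin (q + 1)) (h : (i : ℕ) + 1 < q + 1), y i ≤ x ⟨(i : ℕ) + 1, h⟩}
      = Set.univ.pi fun j => Set.Icc (Matrix.vecCons 0 (y ∘ Fin.castSucc) j) (y j) := by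
  ext x
  have interlace : (∀ (i : Fin (q + 1)) (h : (i : ℕ) + 1 < q + 1), y i ≤ x ⟨(i : ℕ) + 1, h⟩)
      ↔ ∀ i : Fin q, y i.castSucc ≤ x i.succ :=
    ⟨fun h i => h i.castSucc (by simp), fun h i hi => h ⟨i, by omega⟩⟩
  simp only [Set.mem_ofPred_eq, Set.mem_univ_pi, Set.mem_Icc, forall_and, interlace,
    Fin.forall_fin_succ (P := fun j => Matrix.vecCons 0 (y ∘ Fin.castSucc) j ≤ x j),
    Matrix.cons_val_zero, Matrix.cons_val_succ, Function.comp_apply]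
  tauto

theorem integral_pi_Icc_interlacing {q : ℕ} (m : ℕ) (y : Fin (q + 1) → ℝ) (hy0 : 0 ≤ y 0)
    (hy : Monotone y) :
    ∫ x in Set.univ.pi fun j => Set.Icc (Matrix.vecCons 0 (y ∘ Fin.castSucc) j) (y j),
        (∏ i, ∏ j ∈ Finset.Ioi i, (x j - x i)) * ∏ i, x i ^ m
      = (∏ i : Fin (q + 1), (((i : ℕ) : ℝ) + m + 1)⁻¹)
        * ((∏ i, ∏ j ∈ Finset.Ioi i, (y j - y i)) * ∏ i, y i ^ (m + 1)) := by
  set lo : Fin (q + 1) → ℝ := Matrix.vecCons 0 (y ∘ Fin.castSucc)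
  set D : Matrix (Fin (q + 1)) (Fin (q + 1)) ℝ := .of fun j i => y j ^ ((i : ℕ) + (m + 1))
  have hlo : ∀ j, lo j ≤ y j := Fin.cases hy0 fun j => hy j.castSucc_le_succ
  have entry : ∀ j i : Fin (q + 1), ∫ t in Set.Icc (lo j) (y j), t ^ ((i : ℕ) + m)
      = (((i : ℕ) : ℝ) + m + 1)⁻¹ * (D j i - Matrix.vecCons 0 (fun j' => D j'.castSucc) j i) := by
    intro j i
    rw [integral_Icc_eq_integral_Ioc, ← intervalIntegral.integral_of_le (hlo j), integral_pow]
    cases j using Fin.cases <;> simp [lo, D] <;> ring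
  calc _ = ∫ x in Set.univ.pi fun j => Set.Icc (lo j) (y j),
          (Matrix.of fun j i : Fin (q + 1) => x j ^ ((i : ℕ) + m)).det := by
        simp_rw [Matrix.det_of_pow_add, mul_comm]
    _ = (Matrix.of fun j i : Fin (q + 1) =>
          ∫ t in Set.Icc (lo j) (y j), t ^ ((i : ℕ) + m)).det := by
        rw [volume_pi, Measure.restrict_pi_pi]
        exact integral_det_of_apply_pi (fun (i : Fin (q + 1)) (t : ℝ) => t ^ ((i : ℕ) + m))
          fun i j => (continuous_pow _).integrableOn_Icc
    _ = _ := by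
        simp_rw [entry]
        refine (Matrix.det_mul_row (fun i : Fin (q + 1) => (((i : ℕ) : ℝ) + m + 1)⁻¹)
          (.of fun j i => D j i - Matrix.vecCons 0 (fun j' => D j'.castSucc) j i)).trans ?_
        rw [Matrix.det_of_sub_pred_row, Matrix.det_of_pow_add, mul_comm (∏ i, y i ^ (m + 1))]

theorem prod_inv_add_succ_eq_factorial_div (m p : ℕ) :
    ∏ i : Fin p, (((i : ℕ) : ℝ) + m + 1)⁻¹ = (m.factorial : ℝ) / (m + p).factorial := by
  rw [Finset.prod_inv_distrib, Fin.prod_univ_eq_prod_range (fun i => (i : ℝ) + m + 1),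
    ← Nat.factorial_mul_ascFactorial m p, Nat.ascFactorial_eq_prod_range]
  push_cast
  rw [div_mul_cancel_left₀ (by positivity)]
  exact congrArg _ (Finset.prod_congr rfl fun i _ => by ring)

theorem weighted_dixon_anderson_integral (n p : ℕ) (hp : 1 ≤ p) (hnp : p < n)
    (y : Fin p → ℝ) (hy0 : ∀ i, 0 < y i) (hy : StrictMono y) :
    (∫ x in {x : Fin p → ℝ |
          0 ≤ x ⟨0, hp⟩ ∧ (∀ i : Fin p, x i ≤ y i) ∧
          ∀ (i : Fin p) (h : (i : ℕ) + 1 < p), y i ≤ x ⟨(i : ℕ) + 1, h⟩},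
        ((∏ i : Fin p, ∏ j ∈ Finset.Ioi i, (x j - x i)) * ∏ i : Fin p, x i ^ (n - 1 - p))
          / ((∏ i : Fin p, ∏ j ∈ Finset.Ioi i, (y j - y i)) * ∏ i : Fin p, y i ^ (n - p)))
      = (Nat.factorial (n - p - 1) : ℝ) / (Nat.factorial (n - 1) : ℝ) := by
  obtain ⟨q, rfl⟩ : ∃ q, p = q + 1 := ⟨p - 1, by omega⟩
  set m := n - 1 - (q + 1)
  rw [show n - (q + 1) - 1 = m by omega, show n - (q + 1) = m + 1 by omega,
    show n - 1 = m + (q + 1) by omega, show (⟨0, hp⟩ : Fin (q + 1)) = 0 from rfl,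
    interlacing_eq_pi, integral_div, integral_pi_Icc_interlacing m y (hy0 0).le hy.monotone,
    prod_inv_add_succ_eq_factorial_div]
  have hΔy : 0 < ∏ i, ∏ j ∈ Finset.Ioi i, (y j - y i) :=
    Finset.prod_pos fun i _ => Finset.prod_pos fun j hj => sub_pos.2 (hy (Finset.mem_Ioi.1 hj))
  have hpowy : 0 < ∏ i, y i ^ (m + 1) := Finset.prod_pos fun i _ => pow_pos (hy0 i) _
  rw [mul_div_assoc, div_self (mul_pos hΔy hpowy).ne', mul_one]
end

section
/- Let n > p ≥ 1 be integers and define F(y) = Δ(y)^{-1} ∏_{i=1}^p y_i^{p−n} on the set of y ∈ (0,∞)^p with pairwise distinct coordinates. Then F is annihilated by the Laguerre eigenvalues generator: ∑_{i=1}^p [2 y_i ∂_i² F + 2(n − p + 1) ∂_i F + ∑_{j ≠ i} (4 y_i/(y_i − y_j)) ∂_i F] = 0. -/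
/-!
Along the `i`-th coordinate line, `F` is `K · tᵉ · ∏_{j ≠ i} (t - y j)⁻¹` with `e = p - n`, so its
first two partial derivatives are read off its logarithmic derivative, which at `t = y i` is
`e / y i - S_i`, where `S_i = ∑_{j ≠ i} 1 / (y i - y j)` and `T_i = ∑_{j ≠ i} 1 / (y i - y j)²`.
The `i`-th term of the generator then collapses to `-2 F ((1 - e) S_i + y i (S_i² - T_i))`.
Summed over `i`, the first part vanishes by antisymmetry of `1 / (y i - y j)`, and the second
because `y i (S_i² - T_i)` is a sum over triples of distinct indices whose cyclic sums
`a / ((a - b)(a - c)) + b / ((b - c)(b - a)) + c / ((c - a)(c - b))` are zero.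
-/

open Finset Function Filter Topology

section LogDeriv

variable {𝕜 : Type*} [NontriviallyNormedField 𝕜] {ι : Type*} (s : Finset ι) (a : ι → 𝕜) {t : 𝕜}

theorem hasDerivAt_prod_zpow_sub (z : ι → ℤ) (ht : ∀ k ∈ s, t ≠ a k) :
    HasDerivAt (fun t => ∏ k ∈ s, (t - a k) ^ z k)
      ((∏ k ∈ s, (t - a k) ^ z k) * ∑ k ∈ s, z k / (t - a k)) t := by
  classical
  have hfactor : ∀ k ∈ s, HasDerivAt (fun t => (t - a k) ^ z k)
      ((t - a k) ^ z k * (z k / (t - a k))) t := by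
    intro k hk
    have hne : t - a k ≠ 0 := sub_ne_zero.mpr (ht k hk)
    refine ((hasDerivAt_zpow (z k) _ (Or.inl hne)).comp t
      ((hasDerivAt_id t).sub_const (a k))).congr_deriv ?_
    rw [zpow_sub_one₀ hne, mul_one]
    field_simp
  refine (HasDerivAt.fun_finsetProd hfactor).congr_deriv ?_
  rw [mul_sum]
  refine sum_congr rfl fun k hk => ?_
  rw [smul_eq_mul, ← mul_assoc, prod_erase_mul _ _ hk]

theorem hasDerivAt_sum_div_sub (w : ι → 𝕜) (ht : ∀ k ∈ s, t ≠ a k) :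
    HasDerivAt (fun t => ∑ k ∈ s, w k / (t - a k)) (-∑ k ∈ s, w k / (t - a k) ^ 2) t := by
  rw [← sum_neg_distrib]
  refine HasDerivAt.fun_sum fun k hk => ?_
  have hne : t - a k ≠ 0 := sub_ne_zero.mpr (ht k hk)
  have hquot := (hasDerivAt_const t (w k)).fun_div ((hasDerivAt_id' t).sub_const (a k)) hne
  exact hquot.congr_deriv (by ring)

variable (z : ι → ℤ) (K : 𝕜)

theorem deriv_const_mul_prod_zpow_sub (ht : ∀ k ∈ s, t ≠ a k) :
    deriv (fun t => K * ∏ k ∈ s, (t - a k) ^ z k) t =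
      K * (∏ k ∈ s, (t - a k) ^ z k) * ∑ k ∈ s, z k / (t - a k) := by
  rw [((hasDerivAt_prod_zpow_sub s a z ht).const_mul K).deriv, mul_assoc]

theorem deriv_deriv_const_mul_prod_zpow_sub (ht : ∀ k ∈ s, t ≠ a k) :
    deriv (deriv fun t => K * ∏ k ∈ s, (t - a k) ^ z k) t =
      K * (∏ k ∈ s, (t - a k) ^ z k) *
        ((∑ k ∈ s, z k / (t - a k)) ^ 2 - ∑ k ∈ s, z k / (t - a k) ^ 2) := by
  have hnear : ∀ᶠ u in 𝓝 t, ∀ k ∈ s, u ≠ a k :=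
    (eventually_all_finset s).mpr fun k hk => eventually_ne_nhds (ht k hk)
  have hderiv : deriv (fun t => K * ∏ k ∈ s, (t - a k) ^ z k) =ᶠ[𝓝 t]
      fun t => K * (∏ k ∈ s, (t - a k) ^ z k) * ∑ k ∈ s, z k / (t - a k) :=
    hnear.mono fun u hu => deriv_const_mul_prod_zpow_sub s a z K hu
  rw [hderiv.deriv_eq, (((hasDerivAt_prod_zpow_sub s a z ht).const_mul K).fun_mul
    (hasDerivAt_sum_div_sub s a _ ht)).deriv]
  ring

end LogDeriv

theorem pd_pd_eq_deriv_deriv {n : ℕ} (i : Fin n) (f : (Fin n → ℝ) → ℝ) (x : Fin n → ℝ) :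
    pd i (pd i f) x = deriv (deriv fun t => f (update x i t)) (x i) := by
  simp only [pd, update_idem, update_self]

theorem Iio_union_Ioi_eq_univ_erase {α : Type*} [LinearOrder α] [Fintype α]
    [LocallyFiniteOrderBot α] [LocallyFiniteOrderTop α] (i : α) :
    Iio i ∪ Ioi i = univ.erase i := by
  ext j
  simp only [mem_union, mem_Iio, mem_Ioi, mem_erase, mem_univ, and_true]
  exact ne_iff_lt_or_gt.symm

theorem exists_vd_update_eq {n : ℕ} (x : Fin n → ℝ) (i : Fin n) :
    ∃ c, ∀ t, vd (update x i t) = c * ∏ j ∈ univ.erase i, (t - x j) := by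
  let coeff : Fin n → Fin n → ℝ := fun a b =>
    if a = i then 1 else if b = i then -1 else x a - x b
  refine ⟨∏ a, ∏ b ∈ Ioi a, coeff a b, fun t => ?_⟩
  have hfactor : ∀ a, ∀ b ∈ Ioi a, update x i t a - update x i t b =
      coeff a b * ((if a = i then t - x b else 1) * (if b = i then t - x a else 1)) := by
    intro a b hb
    have hab : a ≠ b := (mem_Ioi.mp hb).ne
    by_cases ha : a = i
    · subst ha
      simp [coeff, hab.symm]
    by_cases hb : b = i
    · subst hb
      simp [coeff, ha]
    · simp [coeff, ha, hb]
  have hfirst : ∏ a, ∏ b ∈ Ioi a, (if a = i then t - x b else 1) = ∏ b ∈ Ioi i, (t - x b) := by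
    simp only [prod_ite_irrel, prod_const_one, prod_ite_eq']
    simp
  have hsecond : ∏ a, ∏ b ∈ Ioi a, (if b = i then t - x a else 1) = ∏ a ∈ Iio i, (t - x a) := by
    simp only [prod_ite_eq', mem_Ioi, ← mem_Iio, prod_ite_mem, univ_inter]
  rw [vd, prod_congr rfl fun a _ => prod_congr rfl (hfactor a)]
  simp only [prod_mul_distrib]
  rw [hfirst, hsecond, ← Iio_union_Ioi_eq_univ_erase,
    prod_union (disjoint_left.mpr fun a ha hb => (mem_Iio.mp ha).not_gt (mem_Ioi.mp hb))]
  ring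

-- The `if`s record the coincidences `b = c`, ..., at which Lean's `x / 0 = 0` leaves a term over.
theorem div_sub_mul_sub_add_cyclic {K : Type*} [Field K] [DecidableEq K] (a b c : K) :
    a / ((a - b) * (a - c)) + b / ((b - c) * (b - a)) + c / ((c - a) * (c - b)) =
      (if b = c then a / (a - b) ^ 2 else 0) + (if c = a then b / (b - c) ^ 2 else 0) +
        (if a = b then c / (c - a) ^ 2 else 0) := by
  split_ifs <;> subst_vars <;> simp [sq]
  rename_i hbc hca hab
  have hab' := sub_ne_zero.mpr hab
  have hbc' := sub_ne_zero.mpr hbc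
  have hca' := sub_ne_zero.mpr hca
  field_simp
  ring

section SumIdentities

variable {K : Type*} [Field K] [CharZero K] {ι : Type*} [Fintype ι]

theorem sum_sum_one_div_sub_eq_zero (y : ι → K) : ∑ i, ∑ j, 1 / (y i - y j) = 0 := by
  have hanti : ∑ i, ∑ j, 1 / (y i - y j) = -∑ i, ∑ j, 1 / (y i - y j) := by
    conv_rhs => rw [sum_comm]
    simp only [← sum_neg_distrib, ← one_div_neg_eq_neg_one_div, neg_sub]
  exact self_eq_neg.mp hanti

variable {y : ι → K}

theorem sum_sum_sum_div_sub_mul_sub (hy : Injective y) :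
    ∑ i, ∑ j, ∑ k, y i / ((y i - y j) * (y i - y k)) = ∑ i, ∑ j, y i / (y i - y j) ^ 2 := by
  classical
  have hcycle : ∀ g : ι → ι → ι → K, ∑ i, ∑ j, ∑ k, g j k i = ∑ i, ∑ j, ∑ k, g i j k := by
    intro g
    rw [sum_comm]
    exact sum_congr rfl fun _ _ => sum_comm
  have hcyclic := congrArg (fun g : ι → ι → ι → K => ∑ i, ∑ j, ∑ k, g i j k)
    (funext₃ fun i j k => div_sub_mul_sub_add_cyclic (y i) (y j) (y k))
  simp only [hy.eq_iff, sum_add_distrib] at hcyclic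
  rw [hcycle (fun i j k => y i / ((y i - y j) * (y i - y k))),
    ← hcycle (fun i j k => y k / ((y k - y i) * (y k - y j)))] at hcyclic
  simp only [sum_ite_eq, sum_ite_eq', mem_univ, if_true, sum_ite_irrel, sum_const_zero] at hcyclic
  have hswap : ∑ i, ∑ j, y j / (y j - y i) ^ 2 = ∑ i, ∑ j, y i / (y i - y j) ^ 2 := sum_comm
  rw [hswap] at hcyclic
  linear_combination hcyclic / 3

theorem sum_mul_sq_sum_one_div_sub_sub_eq_zero (hy : Injective y) :
    ∑ i, y i * ((∑ j, 1 / (y i - y j)) ^ 2 - ∑ j, 1 / (y i - y j) ^ 2) = 0 := by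
  have hexpand : ∀ i, y i * ((∑ j, 1 / (y i - y j)) ^ 2 - ∑ j, 1 / (y i - y j) ^ 2) =
      ∑ j, ∑ k, y i / ((y i - y j) * (y i - y k)) - ∑ j, y i / (y i - y j) ^ 2 := by
    intro i
    rw [sq, sum_mul_sum, mul_sub, mul_sum, mul_sum]
    simp only [mul_sum, div_div, mul_one_div]
  rw [sum_congr rfl fun i _ => hexpand i, sum_sub_distrib, sum_sum_sum_div_sub_mul_sub hy,
    sub_self]

end SumIdentities

noncomputable def linkKernel {p : ℕ} (e : ℤ) (y : Fin p → ℝ) : ℝ :=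
  (vd y)⁻¹ * ∏ i, y i ^ e

section LinkKernel

variable {p : ℕ} (e : ℤ) (y : Fin p → ℝ) (i : Fin p)

-- The factor `tᵉ` is written as `(t - 0)ᵉ`, the `i`-th factor of the product.
theorem exists_linkKernel_update_eq : ∃ K, ∀ t, linkKernel e (update y i t) =
    K * ∏ k, (t - update y i 0 k) ^ update (fun _ => (-1 : ℤ)) i e k := by
  obtain ⟨c, hc⟩ := exists_vd_update_eq y i
  refine ⟨c⁻¹ * ∏ j ∈ univ.erase i, y j ^ e, fun t => ?_⟩
  have hpowers : ∏ j, update y i t j ^ e = t ^ e * ∏ j ∈ univ.erase i, y j ^ e := by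
    rw [← mul_prod_erase _ _ (mem_univ i), update_self]
    exact congrArg _ (prod_congr rfl fun j hj => by rw [update_of_ne (ne_of_mem_erase hj)])
  have hfactors : ∏ k, (t - update y i 0 k) ^ update (fun _ => (-1 : ℤ)) i e k =
      t ^ e * (∏ j ∈ univ.erase i, (t - y j))⁻¹ := by
    rw [← mul_prod_erase _ _ (mem_univ i), update_self, update_self, sub_zero, ← prod_inv_distrib]
    exact congrArg _ (prod_congr rfl fun j hj => by
      rw [update_of_ne (ne_of_mem_erase hj), update_of_ne (ne_of_mem_erase hj), zpow_neg_one])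
  rw [linkKernel, hc, hpowers, hfactors, mul_inv]
  ring

-- The sums over all `j` include `j = i`, whose term is `1 / 0 = 0`.
theorem sum_update_div_sub_update_pow {m : ℕ} (hm : m ≠ 0) :
    ∑ k, (update (fun _ => (-1 : ℤ)) i e k : ℝ) / (y i - update y i 0 k) ^ m =
      e / y i ^ m - ∑ j, 1 / (y i - y j) ^ m := by
  rw [← add_sum_erase _ _ (mem_univ i),
    ← sum_erase (f := fun j => 1 / (y i - y j) ^ m) univ (a := i) (by simp [hm]),
    update_self, update_self, sub_zero, sub_eq_add_neg, ← sum_neg_distrib]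
  congr 1
  refine sum_congr rfl fun j hj => ?_
  rw [update_of_ne (ne_of_mem_erase hj), update_of_ne (ne_of_mem_erase hj)]
  push_cast
  ring

variable {e y i} (hyi : y i ≠ 0) (hy : ∀ j, i ≠ j → y i ≠ y j)
include hyi hy

theorem forall_ne_update_zero : ∀ k ∈ univ, y i ≠ update y i 0 k := by
  intro k _
  by_cases hk : k = i
  · rwa [hk, update_self]
  · rw [update_of_ne hk]
    exact hy k (Ne.symm hk)

theorem pd_linkKernel :
    pd i (linkKernel e) y = linkKernel e y * (e / y i - ∑ j, 1 / (y i - y j)) := by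
  obtain ⟨K, hK⟩ := exists_linkKernel_update_eq e y i
  have hKy := hK (y i)
  rw [update_eq_self] at hKy
  simp only [pd, hK]
  rw [deriv_const_mul_prod_zpow_sub _ _ _ _ (forall_ne_update_zero hyi hy), ← hKy]
  simpa only [pow_one] using
    congrArg (linkKernel e y * ·) (sum_update_div_sub_update_pow e y i one_ne_zero)

theorem pd_pd_linkKernel :
    pd i (pd i (linkKernel e)) y = linkKernel e y *
      ((e / y i - ∑ j, 1 / (y i - y j)) ^ 2 - (e / y i ^ 2 - ∑ j, 1 / (y i - y j) ^ 2)) := by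
  obtain ⟨K, hK⟩ := exists_linkKernel_update_eq e y i
  have hKy := hK (y i)
  rw [update_eq_self] at hKy
  rw [pd_pd_eq_deriv_deriv]
  simp only [hK]
  rw [deriv_deriv_const_mul_prod_zpow_sub _ _ _ _ (forall_ne_update_zero hyi hy), ← hKy,
    sum_update_div_sub_update_pow e y i two_ne_zero]
  simpa only [pow_one] using congrArg (fun s => linkKernel e y * (s ^ 2 - _))
    (sum_update_div_sub_update_pow e y i one_ne_zero)

theorem laguerre_generator_term_linkKernel :
    2 * y i * pd i (pd i (linkKernel e)) y + 2 * (1 - e) * pd i (linkKernel e) y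
        + ∑ j ∈ univ.erase i, (4 * y i / (y i - y j)) * pd i (linkKernel e) y =
      -2 * linkKernel e y * ((1 - e) * ∑ j, 1 / (y i - y j) +
        y i * ((∑ j, 1 / (y i - y j)) ^ 2 - ∑ j, 1 / (y i - y j) ^ 2)) := by
  have hcoeff : ∑ j ∈ univ.erase i, 4 * y i / (y i - y j) = 4 * y i * ∑ j, 1 / (y i - y j) := by
    rw [← sum_erase (f := fun j => 1 / (y i - y j)) univ (a := i) (by simp), mul_sum]
    simp only [mul_one_div]
  rw [← sum_mul, hcoeff, pd_pd_linkKernel hyi hy, pd_linkKernel hyi hy]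
  field_simp
  ring

end LinkKernel

theorem laguerre_link_kernel_harmonic_general (n p : ℕ)
    (F : (Fin p → ℝ) → ℝ)
    (hF : F = fun y => (vd y)⁻¹ * ∏ i : Fin p, y i ^ ((p : ℤ) - n))
    (y : Fin p → ℝ) (hy0 : ∀ i, 0 < y i) (hy : ∀ i j, i ≠ j → y i ≠ y j) :
    ∑ i : Fin p, (2 * y i * pd i (pd i F) y + 2 * ((n : ℝ) - p + 1) * pd i F y
        + ∑ j ∈ Finset.univ.erase i, (4 * y i / (y i - y j)) * pd i F y) = 0 := by
  obtain rfl : F = linkKernel ((p : ℤ) - n) := hF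
  have hcoeff : (n : ℝ) - p + 1 = 1 - (((p : ℤ) - n : ℤ) : ℝ) := by push_cast; ring
  have hinj : Injective y := fun i j h => by_contra fun hij => hy i j hij h
  rw [hcoeff, sum_congr rfl fun i _ => laguerre_generator_term_linkKernel (hy0 i).ne' (hy i),
    ← mul_sum, sum_add_distrib, ← mul_sum, sum_sum_one_div_sub_eq_zero,
    sum_mul_sq_sum_one_div_sub_sub_eq_zero hinj, mul_zero, add_zero, mul_zero]

theorem laguerre_link_kernel_harmonic (n p : ℕ) (hp : 1 ≤ p) (hnp : p < n)
    (F : (Fin p → ℝ) → ℝ)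
    (hF : F = fun y => (vd y)⁻¹ * ∏ i : Fin p, y i ^ ((p : ℤ) - n))
    (y : Fin p → ℝ) (hy0 : ∀ i, 0 < y i) (hy : ∀ i j, i ≠ j → y i ≠ y j) :
    ∑ i : Fin p, (2 * y i * pd i (pd i F) y + 2 * ((n : ℝ) - p + 1) * pd i F y
        + ∑ j ∈ Finset.univ.erase i, (4 * y i / (y i - y j)) * pd i F y) = 0 :=
  laguerre_link_kernel_harmonic_general n p F hF y hy0 hy
end

section
/- Let n ≥ 2 and c ∈ ℝ, and consider the operator L = ∑_{i=1}^n (2 x_i ∂_i² + c ∂_i). Then for the function G(x) = Δ(x)^{-1} on the set of x ∈ ℝ^n with pairwise distinct coordinates, the singular-drift operator identity ∑_{i=1}^n [2 x_i ∂_i² G + c ∂_i G + ∑_{j≠i} (4x_i/(x_i − x_j)) ∂_i G] = 0 holds. -/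
/-!
Write `W i = ∑_{j ≠ i} (x i - x j)⁻¹ = ∂ᵢ log Δ` and `Q i = ∑_{j ≠ i} (x i - x j)⁻²`, so that
`∂ᵢ W i = -Q i`. Then `∂ᵢ G = -G W i` and `∂ᵢ² G = G (W i ² + Q i)`, and the drift sum in the
`i`-th summand is `4 x i W i ∂ᵢ G`; hence the summand equals `-2 G x i (W i ² - Q i) - c G W i`.
Now `∑ W i = 0` because `(x i - x j)⁻¹` is antisymmetric, and
`∑ x i (W i ² - Q i) = ∑_{j ≠ k} x i (x i - x j)⁻¹ (x i - x k)⁻¹` vanishes because its cyclic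
symmetrization in `(i, j, k)` is the Lagrange identity `∑_cyc a / ((a - b) (a - c)) = 0`.
-/

open Finset Function Filter Topology

section Calculus

variable {𝕜 : Type*} [NontriviallyNormedField 𝕜]

theorem hasDerivAt_inv_of_hasDerivAt_mul {F w : 𝕜 → 𝕜} {t : 𝕜}
    (hF : HasDerivAt F (F t * w t) t) (h0 : F t ≠ 0) :
    HasDerivAt (fun s => (F s)⁻¹) (-((F t)⁻¹ * w t)) t :=
  (hF.fun_inv h0).congr_deriv (by field_simp)

theorem deriv_deriv_inv_of_eventually_hasDerivAt_mul {F w : 𝕜 → 𝕜} {w' t : 𝕜}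
    (hF : ∀ᶠ s in 𝓝 t, HasDerivAt F (F s * w s) s) (h0 : F t ≠ 0) (hw : HasDerivAt w w' t) :
    deriv (deriv fun s => (F s)⁻¹) t = (F t)⁻¹ * (w t ^ 2 - w') := by
  have hF0 : ∀ᶠ s in 𝓝 t, F s ≠ 0 := hF.self_of_nhds.continuousAt.eventually_ne h0
  have hderiv : deriv (fun s => (F s)⁻¹) =ᶠ[𝓝 t] fun s => -((F s)⁻¹ * w s) := by
    filter_upwards [hF, hF0] with s hs hs0 using (hasDerivAt_inv_of_hasDerivAt_mul hs hs0).deriv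
  rw [hderiv.deriv_eq,
    ((hasDerivAt_inv_of_hasDerivAt_mul hF.self_of_nhds h0).fun_mul hw).fun_neg.deriv]
  ring

end Calculus

theorem Function.Injective.update_of_forall_ne {ι α : Type*} [DecidableEq ι] {x : ι → α}
    (hx : Injective x) {i : ι} {t : α} (ht : ∀ j, j ≠ i → t ≠ x j) :
    Injective (update x i t) := by
  grind [update_apply, Injective]

section

variable {ι K : Type*} [Fintype ι] [CommRing K] [LinearOrder K] [IsStrictOrderedRing K]

theorem sum_sum_eq_zero_of_antisymm {f : ι → ι → K} (hf : ∀ i j, f j i = -f i j) :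
    ∑ i, ∑ j, f i j = 0 := by
  have hswap : ∑ i, ∑ j, f i j = -∑ i, ∑ j, f i j := by
    conv_lhs => rw [sum_comm]
    simp only [← sum_neg_distrib]
    exact sum_congr rfl fun i _ => sum_congr rfl fun j _ => hf i j
  linarith

theorem sum_sum_sum_eq_zero_of_cyclic {f : ι → ι → ι → K}
    (hf : ∀ i j k, f i j k + f j k i + f k i j = 0) : ∑ i, ∑ j, ∑ k, f i j k = 0 := by
  have h₁ : ∑ i, ∑ j, ∑ k, f j k i = ∑ i, ∑ j, ∑ k, f i j k := by
    rw [sum_comm]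
    exact sum_congr rfl fun _ _ => sum_comm
  have h₂ : ∑ i, ∑ j, ∑ k, f k i j = ∑ i, ∑ j, ∑ k, f i j k :=
    (sum_congr rfl fun _ _ => sum_comm).trans sum_comm
  have hsum : ∑ i, ∑ j, ∑ k, (f i j k + f j k i + f k i j) = 0 := by simp [hf]
  simp only [sum_add_distrib] at hsum
  linarith

end

theorem cyclic_sum_mul_inv_sub_mul_inv_sub_eq_zero {K : Type*} [Field K] {a b c : K}
    (hab : a ≠ b) (hbc : b ≠ c) (hca : c ≠ a) :
    a * ((a - b)⁻¹ * (a - c)⁻¹) + b * ((b - c)⁻¹ * (b - a)⁻¹) + c * ((c - a)⁻¹ * (c - b)⁻¹)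
      = 0 := by
  have := sub_ne_zero.2 hab
  have := sub_ne_zero.2 hbc
  have := sub_ne_zero.2 hca
  field_simp
  ring

section Vandermonde

variable {n : ℕ}

-- The sums run over all `j`: the diagonal term vanishes, as `(x i - x i)⁻¹ = 0` in Lean.
noncomputable def invSubSum (i : Fin n) (x : Fin n → ℝ) : ℝ :=
  ∑ j, (x i - x j)⁻¹

noncomputable def invSubSqSum (i : Fin n) (x : Fin n → ℝ) : ℝ :=
  ∑ j, ((x i - x j) ^ 2)⁻¹

theorem sum_sum_Ioi_ite_sub_ite_div (x : Fin n → ℝ) (i : Fin n) :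
    ∑ a, ∑ b ∈ Ioi a, ((if a = i then 1 else 0) - (if b = i then 1 else 0)) / (x a - x b)
      = invSubSum i x := by
  have split (j : Fin n) : (x i - x j)⁻¹
      = (if i < j then (x i - x j)⁻¹ else 0) - (if j < i then (x j - x i)⁻¹ else 0) := by
    rcases lt_trichotomy i j with h | rfl | h
    · simp [h, h.not_gt]
    · simp
    · simp [h, h.not_gt, ← inv_neg]
  simp only [sub_div, sum_sub_distrib, ite_div, invSubSum]
  rw [sum_congr rfl fun j _ => split j, sum_sub_distrib]
  simp [← sum_filter, filter_lt_eq_Ioi]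

theorem vd_ne_zero {x : Fin n → ℝ} (hx : Injective x) : vd x ≠ 0 :=
  prod_ne_zero_iff.2 fun _ _ => prod_ne_zero_iff.2 fun _ hb =>
    sub_ne_zero.2 <| hx.ne (mem_Ioi.1 hb).ne

theorem hasDerivAt_vd_update {x : Fin n → ℝ} (hx : Injective x) (i : Fin n) :
    HasDerivAt (fun t => vd (update x i t)) (vd x * invSubSum i x) (x i) := by
  set f : Fin n → Fin n → ℝ → ℝ := fun a b t => update x i t a - update x i t b
  have hf (a b : Fin n) : HasDerivAt (f a b)
      ((if a = i then 1 else 0) - (if b = i then 1 else 0)) (x i) := by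
    have hupd := hasDerivAt_pi.1 (hasDerivAt_update x i (x i))
    simpa [Pi.single_apply] using (hupd a).fun_sub (hupd b)
  have hf0 (a : Fin n) : ∀ b ∈ Ioi a, f a b (x i) ≠ 0 := fun b hb => by
    simpa [f] using sub_ne_zero.2 <| hx.ne (mem_Ioi.1 hb).ne
  have hvd : (fun t => vd (update x i t)) = fun t => ∏ a, ∏ b ∈ Ioi a, f a b t := rfl
  have hlog : logDeriv (fun t => vd (update x i t)) (x i) = invSubSum i x := by
    rw [hvd, logDeriv_prod (fun a _ => prod_ne_zero_iff.2 (hf0 a))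
      (fun a _ => DifferentiableAt.fun_finsetProd fun b _ => (hf a b).differentiableAt),
      ← sum_sum_Ioi_ite_sub_ite_div]
    refine sum_congr rfl fun a _ => ?_
    rw [logDeriv_prod (hf0 a) fun b _ => (hf a b).differentiableAt]
    refine sum_congr rfl fun b _ => ?_
    simp [logDeriv_apply, (hf a b).deriv, f]
  have hd : DifferentiableAt ℝ (fun t => vd (update x i t)) (x i) := by
    rw [hvd]
    exact .fun_finsetProd fun a _ => .fun_finsetProd fun b _ => (hf a b).differentiableAt
  refine hd.hasDerivAt.congr_deriv ?_
  rw [← hlog, logDeriv_apply, update_eq_self, mul_div_cancel₀ _ (vd_ne_zero hx)]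

theorem eventually_hasDerivAt_vd_update {x : Fin n → ℝ} (hx : Injective x) (i : Fin n) :
    ∀ᶠ t in 𝓝 (x i), HasDerivAt (fun s => vd (update x i s))
      (vd (update x i t) * invSubSum i (update x i t)) t := by
  have hne : ∀ᶠ t in 𝓝 (x i), ∀ j, j ≠ i → t ≠ x j :=
    eventually_all.2 fun j => eventually_imp_distrib_left.2 fun hj =>
      eventually_ne_nhds (hx.ne hj.symm)
  filter_upwards [hne] with t ht
  simpa using hasDerivAt_vd_update (hx.update_of_forall_ne ht) i

theorem hasDerivAt_invSubSum_update {x : Fin n → ℝ} (hx : Injective x) (i : Fin n) :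
    HasDerivAt (fun t => invSubSum i (update x i t)) (-invSubSqSum i x) (x i) := by
  simp only [invSubSum, invSubSqSum, update_self, ← sum_neg_distrib]
  refine HasDerivAt.fun_sum fun j _ => ?_
  rcases eq_or_ne j i with rfl | hj
  · simpa using hasDerivAt_const (x j) (0 : ℝ)
  · simp only [update_of_ne hj]
    simpa [neg_div] using
      ((hasDerivAt_id' (x i)).sub_const (x j)).fun_inv (sub_ne_zero.2 (hx.ne hj.symm))

theorem pd_inv_vd {x : Fin n → ℝ} (hx : Injective x) (i : Fin n) :
    pd i (fun z => (vd z)⁻¹) x = -((vd x)⁻¹ * invSubSum i x) := by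
  have h := hasDerivAt_inv_of_hasDerivAt_mul (w := fun t => invSubSum i (update x i t))
    (eventually_hasDerivAt_vd_update hx i).self_of_nhds (by simpa using vd_ne_zero hx)
  simp only [update_eq_self] at h
  exact h.deriv

theorem pd_pd_inv_vd {x : Fin n → ℝ} (hx : Injective x) (i : Fin n) :
    pd i (pd i fun z => (vd z)⁻¹) x = (vd x)⁻¹ * (invSubSum i x ^ 2 + invSubSqSum i x) := by
  rw [pd_pd_eq_deriv_deriv, deriv_deriv_inv_of_eventually_hasDerivAt_mul
    (eventually_hasDerivAt_vd_update hx i) (by simpa using vd_ne_zero hx)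
    (hasDerivAt_invSubSum_update hx i)]
  simp only [update_eq_self, sub_neg_eq_add]

theorem sum_invSubSum (x : Fin n → ℝ) : ∑ i, invSubSum i x = 0 :=
  sum_sum_eq_zero_of_antisymm fun i j => by rw [← inv_neg, neg_sub]

theorem mul_invSubSum_sq_sub_invSubSqSum (x : Fin n → ℝ) (i : Fin n) :
    x i * (invSubSum i x ^ 2 - invSubSqSum i x)
      = ∑ j, ∑ k, if j = k then 0 else x i * ((x i - x j)⁻¹ * (x i - x k)⁻¹) := by
  have hoff (j : Fin n) (g : Fin n → ℝ) : ∑ k, (if j = k then 0 else g k) = ∑ k, g k - g j := by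
    rw [eq_sub_iff_add_eq, ← Fintype.sum_ite_eq j g, ← sum_add_distrib]
    exact sum_congr rfl fun k _ => by split_ifs <;> simp
  simp only [hoff, sum_sub_distrib]
  rw [invSubSum, invSubSqSum, sq, sum_mul_sum, mul_sub, mul_sum, mul_sum]
  simp only [mul_sum, sq, mul_inv]

theorem sum_mul_invSubSum_sq_sub_invSubSqSum {x : Fin n → ℝ} (hx : Injective x) :
    ∑ i, x i * (invSubSum i x ^ 2 - invSubSqSum i x) = 0 := by
  simp only [mul_invSubSum_sq_sub_invSubSqSum]
  refine sum_sum_sum_eq_zero_of_cyclic fun i j k => ?_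
  rcases eq_or_ne j k with rfl | hjk
  · simp
  rcases eq_or_ne k i with rfl | hki
  · simp
  rcases eq_or_ne i j with rfl | hij
  · simp
  simp only [if_neg hjk, if_neg hki, if_neg hij]
  exact cyclic_sum_mul_inv_sub_mul_inv_sub_eq_zero (hx.ne hij) (hx.ne hjk) (hx.ne hki)

end Vandermonde

theorem inverse_vandermonde_annihilated_general (n : ℕ) (c : ℝ)
    (x : Fin n → ℝ) (hx : ∀ i j, i ≠ j → x i ≠ x j) :
    ∑ i : Fin n, (2 * x i * pd i (pd i (fun z => (vd z)⁻¹)) x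
        + c * pd i (fun z => (vd z)⁻¹) x
        + ∑ j ∈ Finset.univ.erase i, (4 * x i / (x i - x j))
            * pd i (fun z => (vd z)⁻¹) x) = 0 := by
  have hinj : Injective x := fun i j hij => by_contra fun h => hx i j h hij
  have hdrift (i : Fin n) :
      ∑ j ∈ univ.erase i, 4 * x i / (x i - x j) = 4 * x i * invSubSum i x := by
    rw [sum_erase _ (by simp), invSubSum, mul_sum]
    simp only [div_eq_mul_inv]
  have hterm (i : Fin n) : 2 * x i * pd i (pd i (fun z => (vd z)⁻¹)) x
      + c * pd i (fun z => (vd z)⁻¹) x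
      + ∑ j ∈ univ.erase i, (4 * x i / (x i - x j)) * pd i (fun z => (vd z)⁻¹) x
      = -(2 * (vd x)⁻¹) * (x i * (invSubSum i x ^ 2 - invSubSqSum i x))
        - c * (vd x)⁻¹ * invSubSum i x := by
    rw [← sum_mul, hdrift, pd_inv_vd hinj, pd_pd_inv_vd hinj]
    ring
  rw [sum_congr rfl fun i _ => hterm i, sum_sub_distrib, ← mul_sum, ← mul_sum,
    sum_mul_invSubSum_sq_sub_invSubSqSum hinj, sum_invSubSum]
  ring

theorem inverse_vandermonde_annihilated (n : ℕ) (hn : 2 ≤ n) (c : ℝ)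
    (x : Fin n → ℝ) (hx : ∀ i j, i ≠ j → x i ≠ x j) :
    ∑ i : Fin n, (2 * x i * pd i (pd i (fun z => (vd z)⁻¹)) x
        + c * pd i (fun z => (vd z)⁻¹) x
        + ∑ j ∈ Finset.univ.erase i, (4 * x i / (x i - x j))
            * pd i (fun z => (vd z)⁻¹) x) = 0 :=
  inverse_vandermonde_annihilated_general n c x hx
end
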